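/- arXiv:1810.07630 — 9 statements merged into one kernel-verified Lean document; each statement's English description precedes it below -/
import Mathlib

section
/- Any nonzero codeword of a constacyclic code of length n and dimension k has Hamming weight at least n/k; hence the minimum distance of the code is at least n/k. -/
/-!
The code is stable under the constacyclic shift `shiftBy a`, which moves every coordinate one
step along the cycle `finRotate n` and, since `a ≠ 0`, preserves weights. The shifts of a nonzero
codeword `c` therefore lie in the code, all have weight `wt c`, and between them are nonzero at
every coordinate. A basis of their span chosen among them still covers every coordinate and has
at most `k` elements, the code being the image of the polynomials of degree `< k` under
multiplication by `g`. Counting coordinates gives `n ≤ k * wt c`.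
-/

open Polynomial

noncomputable section

def shiftBy {F : Type*} [Field F] {n : ℕ} (a : F) (c : Fin n → F) : Fin n → F :=
  fun i => if _h : (i : ℕ) = 0 then a * c ⟨n - 1, by have := i.isLt; omega⟩
           else c ⟨(i : ℕ) - 1, by have := i.isLt; omega⟩

def codeOf {F : Type*} [Field F] (n : ℕ) (a : F) (g : F[X]) : Set (Fin n → F) :=
  {v | ∃ h : F[X], ∀ i : Fin n, v i = ((g * h) %ₘ (X ^ n - C a)).coeff i}

def schurPow {F : Type*} [Field F] {n : ℕ} (W : Submodule F (Fin n → F)) : ℕ → Submodule F (Fin n → F)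
  | 0 => W
  | 1 => W
  | (i+2) => Submodule.span F {x | ∃ c ∈ W, ∃ d ∈ schurPow W (i+1), x = c * d}

def wt {F : Type*} [Field F] {n : ℕ} (c : Fin n → F) : ℕ := {i | c i ≠ 0}.ncard

def dminW {F : Type*} [Field F] {n : ℕ} (W : Submodule F (Fin n → F)) : ℕ :=
  sInf {w | ∃ c ∈ W, c ≠ 0 ∧ wt c = w}

def toPoly {F : Type*} [Field F] {n : ℕ} (c : Fin n → F) : F[X] :=
  ∑ i : Fin n, Polynomial.C (c i) * X ^ (i : ℕ)

open Module

theorem card_le_finrank_span_mul {K ι : Type*} [DivisionRing K] [Fintype ι] {S : Set (ι → K)}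
    {w : ℕ} (hw : ∀ v ∈ S, (Function.support v).ncard ≤ w) (hcover : ∀ i, ∃ v ∈ S, v i ≠ 0) :
    Fintype.card ι ≤ finrank K (Submodule.span K S) * w := by
  obtain ⟨b, hbS, hspan, hb⟩ := exists_linearIndependent K S
  lift b to Finset (ι → K) using Set.finite_coe_iff.mp hb.finite
  have hbcover : ∀ i, ∃ u ∈ b, u i ≠ 0 := by
    intro i
    by_contra! hb0
    obtain ⟨v, hvS, hvi⟩ := hcover i
    have hker : Submodule.span K (b : Set (ι → K)) ≤ LinearMap.ker (LinearMap.proj i) :=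
      Submodule.span_le.mpr hb0
    exact hvi (hker (hspan ▸ Submodule.subset_span hvS))
  have hunion : Set.univ ⊆ ⋃ u ∈ b, Function.support u := fun i _ ↦ by
    obtain ⟨u, hub, hui⟩ := hbcover i
    exact Set.mem_biUnion hub hui
  calc Fintype.card ι = (Set.univ : Set ι).ncard := by simp
    _ ≤ (⋃ u ∈ b, Function.support u).ncard := Set.ncard_le_ncard hunion
    _ ≤ ∑ u ∈ b, (Function.support u).ncard := b.set_ncard_biUnion_le _
    _ ≤ b.card * w := Finset.sum_le_card_nsmul _ _ _ fun u hu ↦ hw u (hbS hu)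
    _ = finrank K (Submodule.span K S) * w := by
      rw [← hspan, finrank_span_finset_eq_card hb]

section Shift

variable {F : Type*} [Field F] {n : ℕ} {a : F}

theorem shiftBy_finRotate (v : Fin n → F) (i : Fin n) :
    shiftBy a v (finRotate n i) = if (i : ℕ) = n - 1 then a * v i else v i := by
  obtain _ | m := n
  · exact i.elim0
  by_cases hi : i = Fin.last m
  · subst hi
    simp only [shiftBy, finRotate_last, Fin.val_zero, dite_true, Fin.val_last,
      add_tsub_cancel_right, if_true]
    rfl
  · have hrot : (finRotate (m + 1) i : ℕ) = i + 1 := coe_finRotate_of_ne_last hi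
    have hi' : (i : ℕ) ≠ m := fun h ↦ hi (Fin.ext h)
    simp only [shiftBy, hrot, Nat.add_one_ne_zero, dite_false, add_tsub_cancel_right, hi',
      if_false]

theorem shiftBy_finRotate_ne_zero_iff (ha : a ≠ 0) (v : Fin n → F) (i : Fin n) :
    shiftBy a v (finRotate n i) ≠ 0 ↔ v i ≠ 0 := by
  rw [shiftBy_finRotate]
  split_ifs <;> simp [ha]

theorem wt_shiftBy (ha : a ≠ 0) (v : Fin n → F) : wt (shiftBy a v) = wt v := by
  have hsupp : {i | shiftBy a v i ≠ 0} = finRotate n '' {i | v i ≠ 0} := by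
    ext i
    obtain ⟨j, rfl⟩ := (finRotate n).surjective i
    rw [Set.mem_ofPred_eq, shiftBy_finRotate_ne_zero_iff ha, (finRotate n).injective.mem_set_image]
    rfl
  rw [wt, hsupp, Set.ncard_image_of_injective _ (finRotate n).injective, wt]

theorem shiftBy_iterate_finRotate_iterate_ne_zero_iff (ha : a ≠ 0) (v : Fin n → F) (j : ℕ)
    (i : Fin n) : (shiftBy a)^[j] v ((finRotate n)^[j] i) ≠ 0 ↔ v i ≠ 0 := by
  induction j with
  | zero => rfl
  | succ j ih =>
    rw [Function.iterate_succ_apply', Function.iterate_succ_apply',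
      shiftBy_finRotate_ne_zero_iff ha, ih]

theorem wt_shiftBy_iterate (ha : a ≠ 0) (v : Fin n → F) (j : ℕ) :
    wt ((shiftBy a)^[j] v) = wt v := by
  induction j with
  | zero => rfl
  | succ j ih => rw [Function.iterate_succ_apply', wt_shiftBy ha, ih]

end Shift

section Code

variable {F : Type*} [Field F] {n : ℕ}

theorem coeff_X_mul_modByMonic_X_pow_sub_C (hn : 0 < n) (a : F) {P : F[X]}
    (hP : P.degree < n) {i : ℕ} (hi : i < n) :
    ((X * P) %ₘ (X ^ n - C a)).coeff i =
      if i = 0 then a * P.coeff (n - 1) else P.coeff (i - 1) := by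
  set t := P.coeff (n - 1)
  have hPcoeff : ∀ m, n ≤ m → P.coeff m = 0 := fun m hm ↦
    coeff_eq_zero_of_degree_lt (hP.trans_le (by exact_mod_cast hm))
  -- subtracting `t * (X ^ n - C a)` removes the only coefficient of `X * P` of degree `≥ n`
  have hdeg : (X * P - C t * (X ^ n - C a)).degree < (X ^ n - C a).degree := by
    rw [degree_X_pow_sub_C hn, degree_lt_iff_coeff_zero]
    intro m hm
    obtain ⟨m, rfl⟩ := Nat.exists_eq_add_of_lt (show 0 < m by omega)
    simp only [zero_add] at hm ⊢
    rcases hm.eq_or_lt with rfl | hlt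
    · simp [coeff_X_mul, t]
    · simp [coeff_X_mul, hPcoeff m (by omega), hlt.ne']
  have hmod : (X * P) %ₘ (X ^ n - C a) = X * P - C t * (X ^ n - C a) :=
    (div_modByMonic_unique (C t) _ (monic_X_pow_sub_C a hn.ne') ⟨by ring, hdeg⟩).2
  rw [hmod]
  rcases i with _ | i
  · simp [hn.ne, mul_comm]
  · simp [coeff_X_mul, hi.ne]

theorem shiftBy_mem_codeOf (hn : 0 < n) (a : F) (g : F[X]) {v : Fin n → F}
    (hv : v ∈ codeOf n a g) : shiftBy a v ∈ codeOf n a g := by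
  obtain ⟨h, hv⟩ := hv
  have hM : (X ^ n - C a).Monic := monic_X_pow_sub_C a hn.ne'
  have hdeg : ((g * h) %ₘ (X ^ n - C a)).degree < n := by
    simpa [degree_X_pow_sub_C hn] using degree_modByMonic_lt (g * h) hM
  have hmod : (g * (X * h)) %ₘ (X ^ n - C a) =
      (X * ((g * h) %ₘ (X ^ n - C a))) %ₘ (X ^ n - C a) := by
    refine modByMonic_eq_of_dvd_sub hM ?_
    rw [show g * (X * h) - X * ((g * h) %ₘ (X ^ n - C a)) =
      -(X * ((g * h) %ₘ (X ^ n - C a) - g * h)) by ring, dvd_neg]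
    exact dvd_mul_of_dvd_right (dvd_modByMonic_sub _ _) X
  refine ⟨X * h, fun i ↦ ?_⟩
  rw [hmod, coeff_X_mul_modByMonic_X_pow_sub_C hn a hdeg i.isLt, shiftBy]
  split_ifs <;> simp [hv]

def mulCoeffs (n : ℕ) (g : F[X]) : F[X] →ₗ[F] (Fin n → F) :=
  (LinearMap.pi fun i : Fin n ↦ lcoeff F i) ∘ₗ LinearMap.mulLeft F g

@[simp]
theorem mulCoeffs_apply (n : ℕ) (g q : F[X]) (i : Fin n) : mulCoeffs n g q i = (g * q).coeff i :=
  rfl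

theorem codeOf_subset_map_degreeLT (hn : 0 < n) {k : ℕ} {a : F} {g : F[X]}
    (hgdvd : g ∣ X ^ n - C a) (hgdeg : g.natDegree = n - k) :
    codeOf n a g ⊆ (degreeLT F k).map (mulCoeffs n g) := by
  rintro v ⟨h, hv⟩
  have hM : (X ^ n - C a).Monic := monic_X_pow_sub_C a hn.ne'
  obtain ⟨q, hq⟩ : g ∣ (g * h) %ₘ (X ^ n - C a) := by
    have := dvd_add (hgdvd.trans (dvd_modByMonic_sub (g * h) _)) (dvd_mul_right g h)
    rwa [sub_add_cancel] at this
  refine ⟨q, mem_degreeLT.2 ?_, funext fun i ↦ by simp [hv i, hq]⟩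
  by_cases hq0 : q = 0
  · simp [hq0]
  have hg0 : g ≠ 0 := ne_zero_of_dvd_ne_zero hM.ne_zero hgdvd
  have hR : ((g * h) %ₘ (X ^ n - C a)).natDegree < n := by
    rw [natDegree_lt_iff_degree_lt (hq ▸ mul_ne_zero hg0 hq0)]
    simpa [degree_X_pow_sub_C hn] using degree_modByMonic_lt (g * h) hM
  rw [hq, natDegree_mul hg0 hq0] at hR
  exact (natDegree_lt_iff_degree_lt hq0).1 (by omega)

theorem finrank_span_le_of_subset_codeOf (hn : 0 < n) {k : ℕ} {a : F} {g : F[X]}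
    (hgdvd : g ∣ X ^ n - C a) (hgdeg : g.natDegree = n - k) {S : Set (Fin n → F)}
    (hS : S ⊆ codeOf n a g) : finrank F (Submodule.span F S) ≤ k :=
  calc finrank F (Submodule.span F S)
      ≤ finrank F ((degreeLT F k).map (mulCoeffs n g)) :=
        Submodule.finrank_mono <| Submodule.span_le.2 <|
          hS.trans (codeOf_subset_map_degreeLT hn hgdvd hgdeg)
    _ ≤ finrank F (degreeLT F k) := Submodule.finrank_map_le _ _
    _ = k := by simp [(degreeLTEquiv F k).finrank_eq]

end Code

theorem le_mul_wt_of_mem_codeOf {F : Type*} [Field F] {n k : ℕ} {a : F} (ha : a ≠ 0) {g : F[X]}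
    (hgdvd : g ∣ X ^ n - C a) (hgdeg : g.natDegree = n - k) {c : Fin n → F}
    (hc : c ∈ codeOf n a g) (hc0 : c ≠ 0) : n ≤ k * wt c := by
  obtain ⟨i₀, hi₀⟩ := Function.ne_iff.1 hc0
  have hn : 0 < n := i₀.pos
  have : NeZero n := ⟨hn.ne'⟩
  set S := Set.range fun j : ℕ ↦ (shiftBy a)^[j] c
  have hS : S ⊆ codeOf n a g := by
    rintro _ ⟨j, rfl⟩
    exact Set.MapsTo.iterate (fun _ ↦ shiftBy_mem_codeOf hn a g) j hc
  have hwt : ∀ v ∈ S, (Function.support v).ncard ≤ wt c := by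
    rintro _ ⟨j, rfl⟩
    exact (wt_shiftBy_iterate ha c j).le
  have hcover : ∀ i, ∃ v ∈ S, v i ≠ 0 := by
    intro i
    have hrot : (finRotate n)^[(i - i₀ : Fin n)] i₀ = i := by
      rw [← finCycle_eq_finRotate_iterate, finCycle_apply, add_sub_cancel]
    have hne := (shiftBy_iterate_finRotate_iterate_ne_zero_iff ha c (i - i₀ : Fin n) i₀).2 hi₀
    rw [hrot] at hne
    exact ⟨_, ⟨_, rfl⟩, hne⟩
  calc n = Fintype.card (Fin n) := (Fintype.card_fin n).symm
    _ ≤ finrank F (Submodule.span F S) * wt c := card_le_finrank_span_mul hwt hcover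
    _ ≤ k * wt c := Nat.mul_le_mul_right _ (finrank_span_le_of_subset_codeOf hn hgdvd hgdeg hS)

theorem stmt2_general {F : Type*} [Field F] {n k : ℕ}
    (a : F) (ha : a ≠ 0) (g : F[X]) (hgdvd : g ∣ X ^ n - C a) (hgdeg : g.natDegree = n - k) :
    (∀ c ∈ codeOf n a g, c ≠ 0 → n ≤ k * wt c) ∧
      ((∃ c ∈ codeOf n a g, c ≠ 0) →
        n ≤ k * sInf {w | ∃ c ∈ codeOf n a g, c ≠ 0 ∧ wt c = w}) := by
  refine ⟨fun c hc hc0 ↦ le_mul_wt_of_mem_codeOf ha hgdvd hgdeg hc hc0, ?_⟩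
  rintro ⟨c, hc, hc0⟩
  obtain ⟨c', hc', hc'0, hwt⟩ :=
    Nat.sInf_mem (⟨wt c, c, hc, hc0, rfl⟩ : {w | ∃ c ∈ codeOf n a g, c ≠ 0 ∧ wt c = w}.Nonempty)
  rw [← hwt]
  exact le_mul_wt_of_mem_codeOf ha hgdvd hgdeg hc' hc'0

/-- Any nonzero codeword of a constacyclic code of length n and dimension k has
Hamming weight at least n/k (i.e. n ≤ k * wt c); hence the minimum distance is at least n/k. -/
theorem stmt2 {F : Type*} [Field F] [Fintype F] {n k : ℕ} (hk : 0 < k) (hkn : k ≤ n)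
    (a : F) (ha : a ≠ 0) (g : F[X]) (hgdvd : g ∣ X ^ n - C a) (hgdeg : g.natDegree = n - k) :
    (∀ c ∈ codeOf n a g, c ≠ 0 → n ≤ k * wt c) ∧
      ((∃ c ∈ codeOf n a g, c ≠ 0) →
        n ≤ k * sInf {w | ∃ c ∈ codeOf n a g, c ≠ 0 ∧ wt c = w}) :=
  stmt2_general a ha g hgdvd hgdeg
end
end

section
/- If a codeword c of a constacyclic code of length n and dimension k (with k dividing n) has Hamming weight exactly n/k and its first nonzero coordinate is at position p, then the support of c is exactly {p + z·k : 0 ≤ z < n/k}. -/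
/-!
Multiplication by `X` modulo `X ^ n - a` rotates the coefficients of a codeword polynomial,
scaling the one that wraps around by `a ≠ 0`, so rotated supports are again supports of
codewords. A nonzero multiple of `g` has degree at least `n - k`, so no nonzero codeword vanishes
on its top `k` coordinates; after rotation, its support meets every cyclic window of `k`
consecutive positions. Cut `[p, p + n)` into the `n / k` blocks of length `k`: each block
contains a support point, so with weight `n / k` each contains exactly one, and induction on the
block shows that this point is `p + m k`.
-/

open Polynomial

noncomputable section

open Finset

section Windows

def MeetsCyclicWindows (S : Finset ℕ) (n k : ℕ) : Prop :=
  ∀ s < n, ∃ t < k, (s + t) % n ∈ S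

def blockIndex (p k j : ℕ) : ℕ := (j - p) / k

variable {n k p : ℕ} {S : Finset ℕ}

theorem blockIndex_add_mul_add (m : ℕ) {r : ℕ} (hr : r < k) :
    blockIndex p k (p + m * k + r) = m := by
  rw [blockIndex, show p + m * k + r - p = r + m * k by omega,
    Nat.add_mul_div_right _ _ ((Nat.zero_le r).trans_lt hr), Nat.div_eq_of_lt hr, zero_add]

theorem blockIndex_lt (hkn : k ∣ n) {j : ℕ} (hj : j < n) : blockIndex p k j < n / k :=
  Nat.div_lt_of_lt_mul (by rw [mul_comm, Nat.div_mul_cancel hkn]; omega)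

theorem MeetsCyclicWindows.lt_of_forall_le (hwin : MeetsCyclicWindows S n k) (hn : 0 < n)
    (hk : k ≤ n) (hmin : ∀ j ∈ S, p ≤ j) : p < k := by
  obtain ⟨t, htk, ht⟩ := hwin 0 hn
  rw [zero_add, Nat.mod_eq_of_lt (by omega)] at ht
  exact (hmin t ht).trans_lt htk

theorem MeetsCyclicWindows.injOn_blockIndex (hwin : MeetsCyclicWindows S n k) (hkn : k ∣ n)
    (hSn : ∀ j ∈ S, j < n) (hcard : #S = n / k) (hmin : ∀ j ∈ S, p ≤ j) :
    Set.InjOn (blockIndex p k) S := by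
  refine injOn_of_surjOn_of_card_le _ (t := range (n / k))
    (fun j hj => by simpa using blockIndex_lt hkn (hSn j hj)) (fun m hm => ?_) (by simp [hcard])
  simp only [coe_range, Set.mem_Iio] at hm
  have hk : 0 < k := Nat.pos_of_ne_zero (by rintro rfl; simp at hm)
  have hmk : m * k + k ≤ n := by nlinarith [Nat.div_mul_cancel hkn]
  have hpk : p < k := hwin.lt_of_forall_le (by omega) (by omega) hmin
  obtain ⟨t, htk, ht⟩ := hwin (p + m * k) (by omega)
  have hlt : p + m * k + t < n := by
    by_contra! hge
    rw [Nat.mod_eq_sub_mod hge, Nat.mod_eq_of_lt (by omega)] at ht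
    have := hmin _ ht
    omega
  rw [Nat.mod_eq_of_lt hlt] at ht
  exact ⟨_, ht, blockIndex_add_mul_add m htk⟩

theorem MeetsCyclicWindows.mem_iff (hwin : MeetsCyclicWindows S n k) (hk : 0 < k) (hkn : k ∣ n)
    (hSn : ∀ j ∈ S, j < n) (hcard : #S = n / k) (hp : p ∈ S) (hmin : ∀ j ∈ S, p ≤ j)
    (j : ℕ) : j ∈ S ↔ ∃ z < n / k, j = p + z * k := by
  have hn : 0 < n := (Nat.zero_le p).trans_lt (hSn p hp)
  have hpk : p < k := hwin.lt_of_forall_le hn (Nat.le_of_dvd hn hkn) hmin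
  have hinj := hwin.injOn_blockIndex hkn hSn hcard hmin
  have hblock (m : ℕ) : blockIndex p k (p + m * k) = m := by
    simpa using blockIndex_add_mul_add (p := p) m hk
  have hprog : ∀ m < n / k, p + m * k ∈ S := by
    intro m
    induction m with
    | zero => exact fun _ => by simpa using hp
    | succ m ih =>
      intro hm
      have hmk : (m + 2) * k ≤ n := by nlinarith [Nat.div_mul_cancel hkn]
      obtain ⟨t, htk, ht⟩ := hwin (p + m * k + 1) (by nlinarith)
      rw [Nat.mod_eq_of_lt (by nlinarith), add_assoc] at ht
      -- `p + m k` is the only point of `S` in its block, so this one lies in block `m + 1`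
      by_cases hlast : 1 + t < k
      · have := hinj (ih (by omega)) ht (by rw [hblock, blockIndex_add_mul_add m hlast])
        omega
      · convert ht using 1
        ring_nf; omega
  refine ⟨fun hj => ⟨blockIndex p k j, blockIndex_lt hkn (hSn j hj), ?_⟩, ?_⟩
  · exact hinj hj (hprog _ (blockIndex_lt hkn (hSn j hj))) (hblock _).symm
  · rintro ⟨z, hz, rfl⟩
    exact hprog z hz

end Windows

section ConstaShift

variable {F : Type*} [Field F] (a : F) (n : ℕ)

def constaShift (f : F[X]) : F[X] := X * f - C (f.coeff (n - 1)) * (X ^ n - C a)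

variable {a n}

theorem dvd_constaShift {g f : F[X]} (hg : g ∣ X ^ n - C a) (hf : g ∣ f) :
    g ∣ constaShift a n f :=
  dvd_sub (hf.mul_left X) (hg.mul_left _)

theorem degree_constaShift_lt {f : F[X]} (hn : 0 < n) (hf : f.degree < n) :
    (constaShift a n f).degree < n := by
  rw [degree_lt_iff_coeff_zero] at hf ⊢
  intro j hj
  obtain ⟨j, rfl⟩ : ∃ i, j = i + 1 := ⟨j - 1, by omega⟩
  rw [constaShift, coeff_sub, coeff_X_mul, coeff_C_mul, coeff_sub, coeff_X_pow, coeff_C_succ]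
  by_cases hjn : j + 1 = n
  · simp [hjn, show n - 1 = j by omega]
  · simp [hjn, hf j (by omega)]

theorem coeff_constaShift_ne_zero_iff (ha : a ≠ 0) (f : F[X]) {i : ℕ} (hi : i < n) :
    (constaShift a n f).coeff ((i + 1) % n) ≠ 0 ↔ f.coeff i ≠ 0 := by
  rcases (Nat.add_one_le_of_lt hi).eq_or_lt with hi | hi
  · rw [hi, Nat.mod_self, constaShift, coeff_sub, mul_coeff_zero, coeff_C_mul, coeff_sub,
      coeff_X_pow, coeff_C, if_neg (by omega), if_pos rfl, show n - 1 = i by omega]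
    simp [ha]
  · rw [Nat.mod_eq_of_lt hi, constaShift, coeff_sub, coeff_X_mul, coeff_C_mul, coeff_sub,
      coeff_X_pow, coeff_C, if_neg (by omega), if_neg (by omega)]
    simp

theorem coeff_iterate_constaShift_ne_zero_iff (ha : a ≠ 0) (f : F[X]) (m : ℕ) {i : ℕ}
    (hi : i < n) : ((constaShift a n)^[m] f).coeff ((i + m) % n) ≠ 0 ↔ f.coeff i ≠ 0 := by
  induction m with
  | zero => rw [add_zero, Nat.mod_eq_of_lt hi, Function.iterate_zero_apply]
  | succ m ih =>
    rw [Function.iterate_succ_apply', ← add_assoc, ← Nat.mod_add_mod,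
      coeff_constaShift_ne_zero_iff ha _ (Nat.mod_lt _ (by omega)), ih]

theorem mapsTo_constaShift {g : F[X]} (hn : 0 < n) (hg : g ∣ X ^ n - C a) :
    Set.MapsTo (constaShift a n) {f | g ∣ f ∧ f.degree < n} {f | g ∣ f ∧ f.degree < n} :=
  fun _ hf => ⟨dvd_constaShift hg hf.1, degree_constaShift_lt hn hf.2⟩

end ConstaShift

theorem Polynomial.lt_of_mem_support_of_degree_lt {R : Type*} [Semiring R] {f : R[X]} {n j : ℕ}
    (hf : f.degree < n) (hj : j ∈ f.support) : j < n := by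
  by_contra! hnj
  exact mem_support_iff.1 hj (coeff_eq_zero_of_degree_lt (hf.trans_le (by exact_mod_cast hnj)))

theorem meetsCyclicWindows_support {F : Type*} [Field F] {a : F} {n k : ℕ} (ha : a ≠ 0)
    (hkn : k ≤ n) {g f : F[X]} (hg : g ∣ X ^ n - C a) (hgdeg : g.natDegree = n - k)
    (hgf : g ∣ f) (hf : f.degree < n) (hf0 : f ≠ 0) : MeetsCyclicWindows f.support n k := by
  intro s hs
  by_contra! hwin
  simp only [mem_support_iff, ne_eq, not_not] at hwin
  have hn : 0 < n := by omega
  set m := 2 * n - k - s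
  obtain ⟨hgf', hf'⟩ := (mapsTo_constaShift hn hg).iterate m ⟨hgf, hf⟩
  set f' := (constaShift a n)^[m] f
  have hcoeff : ∀ i < n, f'.coeff ((i + m) % n) ≠ 0 ↔ f.coeff i ≠ 0 :=
    fun i hi => coeff_iterate_constaShift_ne_zero_iff ha f m hi
  -- rotating by `m` carries the window `[s, s + k)` onto the top `k` coefficients
  have hmove : ∀ t < k, ((s + t) % n + m) % n = n - k + t := by
    intro t ht
    rcases lt_or_ge (s + t) n with hst | hst
    · rw [Nat.mod_eq_of_lt hst, show s + t + m = n - k + t + n by omega, Nat.add_mod_right,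
        Nat.mod_eq_of_lt (by omega)]
    · rw [Nat.mod_eq_sub_mod hst, Nat.mod_eq_of_lt (show s + t - n < n by omega),
        show s + t - n + m = n - k + t by omega, Nat.mod_eq_of_lt (by omega)]
  have hf'0 : f' ≠ 0 := by
    obtain ⟨i, hi⟩ := support_nonempty.2 hf0
    have := (hcoeff i (lt_of_mem_support_of_degree_lt hf hi)).2 (mem_support_iff.1 hi)
    exact fun h => this (by rw [h, coeff_zero])
  have hdeg : f'.degree < (n - k : ℕ) := by
    refine (degree_lt_iff_coeff_zero _ _).2 fun j hj => ?_
    by_cases hjn : j < n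
    · obtain ⟨t, ht, rfl⟩ : ∃ t < k, j = n - k + t := ⟨j - (n - k), by omega, by omega⟩
      rw [← hmove t ht]
      by_contra h
      exact (hcoeff _ (Nat.mod_lt _ hn)).1 h (hwin t ht)
    · exact coeff_eq_zero_of_degree_lt (hf'.trans_le (by exact_mod_cast not_lt.1 hjn))
  have := natDegree_le_of_dvd hgf' hf'0
  rw [← natDegree_lt_iff_degree_lt hf'0] at hdeg
  omega

theorem exists_poly_of_mem_codeOf {F : Type*} [Field F] {n : ℕ} {a : F} {g : F[X]}
    {c : Fin n → F} (hn : 0 < n) (hg : g ∣ X ^ n - C a) (hc : c ∈ codeOf n a g) :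
    ∃ f : F[X], g ∣ f ∧ f.degree < n ∧ ∀ i, c i = f.coeff i := by
  obtain ⟨h, hch⟩ := hc
  have hmonic := monic_X_pow_sub_C a hn.ne'
  refine ⟨_, ?_, ?_, hch⟩
  · rw [modByMonic_eq_sub_mul_div]
    exact dvd_sub (dvd_mul_right g h) (hg.mul_right _)
  · exact (degree_modByMonic_lt _ hmonic).trans_eq (degree_X_pow_sub_C hn a)

theorem wt_eq_card_support {F : Type*} [Field F] {n : ℕ} {c : Fin n → F} {f : F[X]}
    (hf : f.degree < n) (hc : ∀ i, c i = f.coeff i) : wt c = #f.support := by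
  have hsupp : (f.support : Set ℕ) = Fin.val '' {i | c i ≠ 0} := by
    ext j
    refine ⟨fun hj => ⟨⟨j, lt_of_mem_support_of_degree_lt hf hj⟩, ?_, rfl⟩, ?_⟩
    · simpa [hc] using hj
    · rintro ⟨i, hi, rfl⟩
      simpa [hc] using hi
  rw [wt, ← Set.ncard_image_of_injective _ Fin.val_injective, ← hsupp, Set.ncard_coe_finset]

/-- If a codeword of a constacyclic code of length n and dimension k (k ∣ n)
has Hamming weight exactly n/k and first nonzero coordinate at position p, then its support
is exactly {p + z·k : 0 ≤ z < n/k}. -/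
theorem stmt3 {F : Type*} [Field F] {n k : ℕ} (hk : 0 < k) (hkdvd : k ∣ n)
    (a : F) (ha : a ≠ 0) (g : F[X]) (hgdvd : g ∣ X ^ n - C a) (hgdeg : g.natDegree = n - k)
    (c : Fin n → F) (hc : c ∈ codeOf n a g) (hwt : wt c = n / k)
    (p : ℕ) (hp : p < n)
    (hfirst : c ⟨p, hp⟩ ≠ 0) (hbefore : ∀ j : ℕ, ∀ _hj : j < p, c ⟨j, by omega⟩ = 0) :
    ∀ i : Fin n, c i ≠ 0 ↔ ∃ z : ℕ, z < n / k ∧ (i : ℕ) = p + z * k := by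
  obtain ⟨f, hgf, hf, hcf⟩ := exists_poly_of_mem_codeOf (by omega) hgdvd hc
  have hfp : p ∈ f.support := by simpa [hcf] using hfirst
  have hf0 : f ≠ 0 := by rintro rfl; simp at hfp
  intro i
  rw [hcf, ← mem_support_iff]
  have hwin : MeetsCyclicWindows f.support n k :=
    meetsCyclicWindows_support ha (Nat.le_of_dvd (by omega) hkdvd) hgdvd hgdeg hgf hf hf0
  refine hwin.mem_iff hk hkdvd (fun j => lt_of_mem_support_of_degree_lt hf)
    (by rw [← wt_eq_card_support hf hcf, hwt]) hfp (fun j hj => ?_) i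
  by_contra! hjp
  exact mem_support_iff.1 hj (by simpa [hcf] using hbefore j hjp)
end
end

section
/- Let C be a constacyclic code in F^n with modulus x^n - a, and let ℓ be the multiplicative order of a in F. Then for every natural number z, the Schur power code C^{zℓ+1} is again closed under the constacyclic shift (c_0,...,c_{n-1}) ↦ (a·c_{n-1}, c_0, ..., c_{n-2}), hence is a constacyclic code with the same modulus. -/
open Polynomial

noncomputable section

/-!
The twisted shift is multiplicative up to its twist: shifting `c` by `b` and `d` by `b'` and
multiplying gives the `(b * b')`-shift of `c * d`. Hence if `W` is closed under the `a`-shift,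
the Schur power `W^⟨m⟩` is closed under the `a ^ m`-shift, and `a ^ (z * ℓ + 1) = a`.
-/

def shiftByLinearMap {F : Type*} [Field F] {n : ℕ} (b : F) :
    (Fin n → F) →ₗ[F] (Fin n → F) where
  toFun := shiftBy b
  map_add' c d := by
    funext i
    simp only [shiftBy, Pi.add_apply]
    split <;> ring
  map_smul' r c := by
    funext i
    simp only [shiftBy, Pi.smul_apply, smul_eq_mul, RingHom.id_apply]
    split <;> ring

lemma shiftBy_mul {F : Type*} [Field F] {n : ℕ} (b b' : F) (c d : Fin n → F) :
    shiftBy (b * b') (c * d) = shiftBy b c * shiftBy b' d := by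
  funext i
  simp only [shiftBy, Pi.mul_apply]
  split <;> ring

lemma shiftBy_pow_mem_schurPow {F : Type*} [Field F] {n : ℕ} {a : F}
    {W : Submodule F (Fin n → F)} (hW : ∀ c ∈ W, shiftBy a c ∈ W) (m : ℕ) :
    ∀ c ∈ schurPow W (m + 1), shiftBy (a ^ (m + 1)) c ∈ schurPow W (m + 1) := by
  induction m with
  | zero => simpa [schurPow] using hW
  | succ k ih =>
    have hmap : (schurPow W (k + 2)).map (shiftByLinearMap (a ^ (k + 2))) ≤
        schurPow W (k + 2) := by
      rw [schurPow, Submodule.map_span, Submodule.span_le]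
      rintro _ ⟨_, ⟨c, hc, d, hd, rfl⟩, rfl⟩
      refine Submodule.subset_span ⟨shiftBy a c, hW c hc, shiftBy (a ^ (k + 1)) d, ih d hd, ?_⟩
      rw [shiftByLinearMap, LinearMap.coe_mk, AddHom.coe_mk, ← shiftBy_mul, ← pow_succ']
    exact fun c hc => hmap ⟨c, hc, rfl⟩

theorem stmt4_general {F : Type*} [Field F] {n : ℕ}
    (a : F) (W : Submodule F (Fin n → F))
    (hW : ∀ c ∈ W, shiftBy a c ∈ W) :
    ∀ z : ℕ, ∀ c ∈ schurPow W (z * orderOf a + 1),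
      shiftBy a c ∈ schurPow W (z * orderOf a + 1) := by
  intro z c hc
  have hpow : a ^ (z * orderOf a + 1) = a := by
    rw [pow_succ, pow_mul', pow_orderOf_eq_one, one_pow, one_mul]
  simpa only [hpow] using shiftBy_pow_mem_schurPow hW (z * orderOf a) c hc

/-- If C is a constacyclic code (a subspace closed under the a-shift) and ℓ is
the multiplicative order of a, then for every z the Schur power C^{zℓ+1} is again closed
under the a-shift, hence constacyclic with the same modulus. -/
theorem stmt4 {F : Type*} [Field F] [Fintype F] {n : ℕ} (hn : 0 < n)
    (a : F) (ha : a ≠ 0) (W : Submodule F (Fin n → F))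
    (hW : ∀ c ∈ W, shiftBy a c ∈ W) :
    ∀ z : ℕ, ∀ c ∈ schurPow W (z * orderOf a + 1),
      shiftBy a c ∈ schurPow W (z * orderOf a + 1) :=
  stmt4_general a W hW
end
end

section
/- Let k divide n, a ∈ F nonzero, and suppose g(x) = u·∑_{i=0}^{n/k - 1} d^i x^{k·i} where u is a unit and d ∈ F satisfies d^{-(n/k)} = a. Then x^k·g(x) ≡ d^{-1}·g(x) (mod x^n - a). -/
open Polynomial

noncomputable section

/- With `y = C d * X ^ k` the sum is the geometric sum `∑ yⁱ`, and `(y - 1) * ∑_{i<m} yⁱ = yᵐ - 1`,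
where `yᵐ = C (dᵐ) * X ^ (k * m)` is a constant multiple of `X ^ (k * m) - C a` once `dᵐ * a = 1`. -/
theorem X_pow_sub_C_mul_geom_sum {R : Type*} [CommRing R] {a d e : R} (k m : ℕ)
    (hed : e * d = 1) (hda : d ^ m * a = 1) :
    (X ^ k - C e) * ∑ i ∈ Finset.range m, C (d ^ i) * X ^ (k * i) =
      C (e * d ^ m) * (X ^ (k * m) - C a) := by
  have hsum : ∑ i ∈ Finset.range m, C (d ^ i) * X ^ (k * i) =
      ∑ i ∈ Finset.range m, (C d * X ^ k) ^ i := by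
    simp only [mul_pow, ← pow_mul, C_pow]
  have hfactor : (X ^ k - C e : R[X]) = C e * (C d * X ^ k - 1) := by
    rw [mul_sub, ← mul_assoc, ← C_mul, hed, C_1, one_mul, mul_one]
  have hconst : C (d ^ m) * C a = (1 : R[X]) := by rw [← C_mul, hda, C_1]
  rw [hsum, hfactor, mul_assoc, mul_geom_sum, mul_pow, ← C_pow, ← pow_mul, C_mul]
  linear_combination C e * hconst

theorem stmt6_general {F : Type*} [Field F] {n k : ℕ} (hkdvd : k ∣ n)
    (a : F) (ha : a ≠ 0) (d : F) (hd : d ≠ 0) (hda : d ^ (n / k) = a⁻¹)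
    (u : F)
    (g : F[X]) (hg : g = C u * ∑ i ∈ Finset.range (n / k), C (d ^ i) * X ^ (k * i)) :
    (X ^ n - C a) ∣ (X ^ k * g - C d⁻¹ * g) := by
  have hfactor : X ^ k * g - C d⁻¹ * g =
      C u * ((X ^ k - C d⁻¹) * ∑ i ∈ Finset.range (n / k), C (d ^ i) * X ^ (k * i)) := by
    rw [hg]; ring
  have hgeom := X_pow_sub_C_mul_geom_sum k (n / k) (inv_mul_cancel₀ hd)
    (by rw [hda, inv_mul_cancel₀ ha])
  rw [Nat.mul_div_cancel' hkdvd] at hgeom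
  rw [hfactor, hgeom]
  exact dvd_mul_of_dvd_right (dvd_mul_left _ _) _

/-- If g(x) = u·∑_{i<n/k} d^i x^{ki} with u a unit and d^{n/k} = a⁻¹,
then x^k·g(x) ≡ d⁻¹·g(x) (mod x^n - a). -/
theorem stmt6 {F : Type*} [Field F] [Fintype F] {n k : ℕ} (hn : 0 < n) (hkdvd : k ∣ n)
    (hk : 0 < k) (a : F) (ha : a ≠ 0) (d : F) (hd : d ≠ 0) (hda : d ^ (n / k) = a⁻¹)
    (u : F) (hu : u ≠ 0)
    (g : F[X]) (hg : g = C u * ∑ i ∈ Finset.range (n / k), C (d ^ i) * X ^ (k * i)) :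
    (X ^ n - C a) ∣ (X ^ k * g - C d⁻¹ * g) :=
  stmt6_general hkdvd a ha d hd hda u g hg
end
end

section
/- Let C ⊆ F^n be a constacyclic code with modulus x^n - a generated by g(x) = u·∑_{i=0}^{n/k - 1} d^i x^{k·i}, where u is a unit, k | n, and d^{-(n/k)} = a. Then the basis {coeff(x^i·g(x) mod x^n - a) : 0 ≤ i < k} of C consists of vectors with pairwise disjoint supports, and every nonzero basis vector has Hamming weight exactly n/k. -/
/-!
For `i < k` the product `X ^ i * g = ∑_{j < n/k} u d^j X^(i + k j)` already has degree `< n`, so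
reducing it modulo `X ^ n - a` changes nothing. Its coefficient at `m` is `u d^(m / k)` when
`m % k = i` and `m / k < n / k`, and `0` otherwise: the supports are distinct residue classes
modulo `k`, each meeting `{0, …, n - 1}` in `n / k` admissible positions.
-/

open Polynomial

noncomputable section

theorem Nat.eq_add_mul_iff_of_lt {m i k j : ℕ} (hi : i < k) :
    m = i + k * j ↔ m % k = i ∧ m / k = j := by
  rw [and_comm, Nat.div_mod_unique (by omega)]
  exact ⟨fun h => ⟨h.symm, hi⟩, fun h => h.1.symm⟩

theorem coeff_X_pow_mul_sum_C_mul_X_pow_mul {R : Type*} [Semiring R] {i k : ℕ} (hi : i < k)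
    (N : ℕ) (c : ℕ → R) (m : ℕ) :
    (X ^ i * ∑ j ∈ Finset.range N, C (c j) * X ^ (k * j)).coeff m =
      if m % k = i ∧ m / k < N then c (m / k) else 0 := by
  have hmonomials : X ^ i * ∑ j ∈ Finset.range N, C (c j) * X ^ (k * j) =
      ∑ j ∈ Finset.range N, C (c j) * X ^ (i + k * j) := by
    rw [Finset.mul_sum]
    refine Finset.sum_congr rfl fun j _ => ?_
    rw [pow_add, ← mul_assoc, ← mul_assoc, X_pow_mul (p := C (c j))]
  simp only [hmonomials, finsetSum_coeff, coeff_C_mul_X_pow, Nat.eq_add_mul_iff_of_lt hi, ite_and,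
    Finset.sum_ite_irrel, Finset.sum_ite_eq, Finset.sum_const_zero, Finset.mem_range]

theorem degree_X_pow_mul_sum_C_mul_X_pow_mul_lt {R : Type*} [Semiring R] {i k : ℕ} (hi : i < k)
    (N : ℕ) (c : ℕ → R) :
    (X ^ i * ∑ j ∈ Finset.range N, C (c j) * X ^ (k * j)).degree < ↑(N * k) := by
  rw [degree_lt_iff_coeff_zero]
  intro m hm
  simp only [coeff_X_pow_mul_sum_C_mul_X_pow_mul hi, Nat.div_lt_iff_lt_mul (by omega : 0 < k)]
  exact if_neg (by omega)

theorem modByMonic_X_pow_sub_C_eq_self {R : Type*} [Ring R] [Nontrivial R] {p : R[X]} {n : ℕ}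
    (a : R) (hp : p.degree < n) : p %ₘ (X ^ n - C a) = p := by
  rcases Nat.eq_zero_or_pos n with rfl | hn
  · rw [Nat.cast_zero, Nat.WithBot.lt_zero_iff, degree_eq_bot] at hp
    rw [hp, zero_modByMonic]
  · rwa [modByMonic_eq_self_iff (monic_X_pow_sub_C a hn.ne'), degree_X_pow_sub_C hn]

theorem ncard_setOf_mod_eq_and_div_lt {n k i : ℕ} (hi : i < k) :
    {m : Fin n | (m : ℕ) % k = i ∧ (m : ℕ) / k < n / k}.ncard = n / k := by
  have hlt (j : Fin (n / k)) : i + k * j < n :=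
    Nat.lt_of_div_lt_div (c := k) (by rw [((Nat.eq_add_mul_iff_of_lt hi).1 rfl).2]; exact j.2)
  have hrange : {m : Fin n | (m : ℕ) % k = i ∧ (m : ℕ) / k < n / k} =
      Set.range (fun j : Fin (n / k) => (⟨i + k * j, hlt j⟩ : Fin n)) := by
    ext m
    simp only [Set.mem_ofPred_eq, Set.mem_range, Fin.ext_iff, eq_comm (b := (m : ℕ)),
      Nat.eq_add_mul_iff_of_lt hi]
    exact ⟨fun h => ⟨⟨_, h.2⟩, h.1, rfl⟩, fun ⟨j, h, hj⟩ => ⟨h, hj ▸ j.2⟩⟩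
  rw [hrange, Set.ncard_range_of_injective, Nat.card_eq_fintype_card, Fintype.card_fin]
  intro j j' h
  simp only [Fin.mk.injEq, add_right_inj] at h
  exact Fin.ext (Nat.eq_of_mul_eq_mul_left (by omega) h)

theorem stmt9_general {F : Type*} [Field F] {n k : ℕ}
    (a : F) (d : F) (hd : d ≠ 0)
    (u : F) (hu : u ≠ 0)
    (g : F[X]) (hg : g = C u * ∑ i ∈ Finset.range (n / k), C (d ^ i) * X ^ (k * i))
    (b : ℕ → Fin n → F)
    (hb : ∀ i : ℕ, ∀ m : Fin n, b i m = ((X ^ i * g) %ₘ (X ^ n - C a)).coeff m) :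
    (∀ i j : ℕ, i < k → j < k → i ≠ j → ∀ m : Fin n, b i m = 0 ∨ b j m = 0) ∧
      (∀ i : ℕ, i < k → b i ≠ 0 → wt (b i) = n / k) := by
  have hg' : g = ∑ j ∈ Finset.range (n / k), C (u * d ^ j) * X ^ (k * j) := by
    simp only [hg, Finset.mul_sum, C_mul, mul_assoc]
  have hb' (i : ℕ) (hi : i < k) (m : Fin n) :
      b i m =
        if (m : ℕ) % k = i ∧ (m : ℕ) / k < n / k then u * d ^ ((m : ℕ) / k) else 0 := by
    have hdeg : (X ^ i * g).degree < (n : WithBot ℕ) :=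
      hg' ▸ (degree_X_pow_mul_sum_C_mul_X_pow_mul_lt hi _ _).trans_le
        (Nat.cast_le.2 (Nat.div_mul_le_self n k))
    rw [hb, modByMonic_X_pow_sub_C_eq_self a hdeg, hg', coeff_X_pow_mul_sum_C_mul_X_pow_mul hi]
  refine ⟨fun i j hi hj hij m => ?_, fun i hi _ => ?_⟩
  · rw [hb' i hi, hb' j hj]
    by_cases hmi : (m : ℕ) % k = i
    · exact Or.inr (if_neg fun hmj => hij (hmi.symm.trans hmj.1))
    · exact Or.inl (if_neg fun h => hmi h.1)
  · rw [wt, ← ncard_setOf_mod_eq_and_div_lt (n := n) hi]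
    congr 1
    ext m
    simp [hb' i hi, hu, hd]

/-- If g = u·∑_{i<n/k} d^i x^{ki} with u a unit, k ∣ n, d^{n/k} = a⁻¹, then
the basis {coeff(x^i g mod x^n - a) : 0 ≤ i < k} consists of vectors with pairwise disjoint
supports, and every nonzero basis vector has Hamming weight exactly n/k. -/
theorem stmt9 {F : Type*} [Field F] [Fintype F] {n k : ℕ} (hn : 0 < n) (hk : 0 < k)
    (hkdvd : k ∣ n) (a : F) (ha : a ≠ 0) (d : F) (hd : d ≠ 0) (hda : d ^ (n / k) = a⁻¹)
    (u : F) (hu : u ≠ 0)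
    (g : F[X]) (hg : g = C u * ∑ i ∈ Finset.range (n / k), C (d ^ i) * X ^ (k * i))
    (b : ℕ → Fin n → F)
    (hb : ∀ i : ℕ, ∀ m : Fin n, b i m = ((X ^ i * g) %ₘ (X ^ n - C a)).coeff m) :
    (∀ i j : ℕ, i < k → j < k → i ≠ j → ∀ m : Fin n, b i m = 0 ∨ b j m = 0) ∧
      (∀ i : ℕ, i < k → b i ≠ 0 → wt (b i) = n / k) :=
  stmt9_general a d hd u hu g hg b hb
end
end

section
/- For a cyclic code of length n (modulus x^n - 1) over a finite field F, the map k ↦ the code generated by m_k(x) = ∑_{i=0}^{n/k - 1} x^{k·i} is a bijection between the positive divisors of n and the set of nonzero cyclic codes C ⊆ F^n satisfying C^{⟨2⟩} = C; moreover the code corresponding to divisor k has dimension k. -/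
/-!
A nonzero cyclic code `W` with `W^⟨2⟩ = W` is closed under the componentwise product, and over
`F = 𝔽_q` the power `w ^ (q - 1)` is the indicator of the support of `w`; the union of the
supports of the cyclic shifts of a nonzero codeword is everything, so `1 ∈ W` and `W` is a
translation-invariant subalgebra of `F^(ℤ/n)`. Such a subalgebra consists exactly of the
functions invariant under its group of periods `H`: products of Lagrange-type functions
`δ_g ∈ W` (`δ_g 0 = 1`, `δ_g g = 0`, `g ∉ H`) give the indicator of `H`, its translates
separate the cosets, and every `H`-invariant function is a combination of them. Since
`H = kℤ/nℤ` for some `k ∣ n`, `W` is the code of `k`-periodic words, which is also the code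
generated by `m_k`, because `(x^k - 1) m_k = x^n - 1`; it has dimension `k`.
-/

open Polynomial

noncomputable section

lemma pow_succ_mem_of_mul_mem {M : Type*} [Monoid M] {S : Set M}
    (hmul : ∀ a ∈ S, ∀ b ∈ S, a * b ∈ S) {a : M} (ha : a ∈ S) (m : ℕ) :
    a ^ (m + 1) ∈ S := by
  induction m with
  | zero => simpa using ha
  | succ m ih => rw [pow_succ]; exact hmul _ ih _ ha

lemma forall_add_mem_of_add_mem {F G : Type*} [AddMonoid G] {S : Set (G → F)} {a : G}
    (hgen : ∀ g : G, ∃ m : ℕ, m • a = g) (ha : ∀ f ∈ S, (fun x => f (x + a)) ∈ S) :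
    ∀ f ∈ S, ∀ g, (fun x => f (x + g)) ∈ S := by
  intro f hf g
  obtain ⟨m, rfl⟩ := hgen g
  induction m with
  | zero => simpa using hf
  | succ m ih => simpa [succ_nsmul', add_assoc] using ha _ ih

section Translation

variable {F G : Type*} [Field F] [AddCommGroup G]

def periods (S : Set (G → F)) : AddSubgroup G where
  carrier := {h | ∀ f ∈ S, ∀ x, f (x + h) = f x}
  zero_mem' := by simp
  add_mem' := fun ha hb f hf x => by rw [← add_assoc, hb f hf, ha f hf]
  neg_mem' := fun {h} ha f hf x => by rw [← ha f hf (x + -h), neg_add_cancel_right]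

lemma one_mem_of_mul_mem [Fintype F] [Fintype G] {W : Submodule F (G → F)}
    (hmul : ∀ f ∈ W, ∀ g ∈ W, f * g ∈ W)
    (htrans : ∀ f ∈ W, ∀ g, (fun x => f (x + g)) ∈ W) (hW : W ≠ ⊥) : (1 : G → F) ∈ W := by
  classical
  obtain ⟨w, hw, hw0⟩ := (Submodule.ne_bot_iff W).mp hW
  obtain ⟨x₀, hx₀⟩ := Function.ne_iff.mp hw0
  -- Fermat: `a ^ (q - 1)` is `1` or `0` according as `a ≠ 0` or `a = 0`.
  have hsupp : ∀ g, ∃ e ∈ W, ∀ x, e x = if w (x + g) = 0 then 0 else 1 := by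
    intro g
    obtain ⟨m, hm⟩ : ∃ m, Fintype.card F - 1 = m + 1 :=
      Nat.exists_eq_add_one.mpr (by have := Fintype.one_lt_card (α := F); omega)
    refine ⟨(fun x => w (x + g)) ^ (m + 1),
      pow_succ_mem_of_mul_mem (S := (W : Set (G → F))) hmul (htrans w hw g) m, fun x => ?_⟩
    rw [Pi.pow_apply, ← hm]
    split_ifs with h
    · rw [h, zero_pow (by omega)]
    · exact FiniteField.pow_card_sub_one_eq_one _ h
  have hunion : ∀ s : Finset G,
      ∃ e ∈ W, ∀ x, e x = if ∃ g ∈ s, w (x + g) ≠ 0 then 1 else 0 := by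
    intro s
    induction s using Finset.induction_on with
    | empty => exact ⟨0, W.zero_mem, by simp⟩
    | insert g s _ ih =>
      obtain ⟨e, he, hex⟩ := ih
      obtain ⟨i, hi, hix⟩ := hsupp g
      refine ⟨e + i - e * i, W.sub_mem (W.add_mem he hi) (hmul _ he _ hi), fun x => ?_⟩
      simp only [Pi.add_apply, Pi.sub_apply, Pi.mul_apply, hex, hix, Finset.exists_mem_insert]
      by_cases h₁ : w (x + g) = 0 <;> by_cases h₂ : ∃ g ∈ s, w (x + g) ≠ 0 <;>
        simp [h₁, h₂]
  obtain ⟨e, he, hex⟩ := hunion Finset.univ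
  convert he using 1
  funext x
  rw [hex, if_pos ⟨-x + x₀, Finset.mem_univ _, by rwa [add_neg_cancel_left]⟩, Pi.one_apply]

variable {A : Subalgebra F (G → F)} (htrans : ∀ f ∈ A, ∀ g, (fun x => f (x + g)) ∈ A)
include htrans

lemma exists_mem_apply_zero_eq_one_of_notMem_periods {g : G}
    (hg : g ∉ periods (A : Set (G → F))) : ∃ δ ∈ A, δ 0 = 1 ∧ δ g = 0 := by
  obtain ⟨f, hf, x, hfx⟩ : ∃ f ∈ A, ∃ x, f (x + g) ≠ f x := by
    simpa [periods] using hg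
  have hc : f x - f (x + g) ≠ 0 := sub_ne_zero.mpr hfx.symm
  refine ⟨(f x - f (x + g))⁻¹ • ((fun y => f (y + x)) - algebraMap F _ (f (x + g))),
    A.smul_mem (A.sub_mem (htrans f hf x) (A.algebraMap_mem _)) _, ?_, ?_⟩
  · simp [inv_mul_cancel₀ hc]
  · simp [add_comm g x]

lemma indicator_periods_mem [Fintype G] :
    (periods (A : Set (G → F)) : Set G).indicator 1 ∈ A := by
  classical
  set H := periods (A : Set (G → F))
  choose! δ hδA hδ0 hδg using
    fun g (hg : g ∉ H) => exists_mem_apply_zero_eq_one_of_notMem_periods htrans hg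
  convert A.prod_mem (t := Finset.univ.filter (· ∉ H)) fun g hg => hδA g (by simpa using hg)
    using 1
  funext x
  rw [Finset.prod_apply, Set.indicator_apply]
  split_ifs with hx
  · refine (Finset.prod_eq_one fun g hg => ?_).symm.trans rfl
    rw [← hδ0 g (by simpa using hg), ← zero_add x]
    exact hx _ (hδA g (by simpa using hg)) 0
  · exact (Finset.prod_eq_zero (f := fun g => δ g x) (i := x) (by simpa using hx)
      (hδg x hx)).symm

lemma mem_iff_forall_periods [Fintype G] {f : G → F} :
    f ∈ A ↔ ∀ h ∈ periods (A : Set (G → F)), ∀ x, f (x + h) = f x := by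
  classical
  refine ⟨fun hf h hh => hh f hf, fun hf => ?_⟩
  set H := periods (A : Set (G → F))
  set e : G → G → F := fun y z => (H : Set G).indicator 1 (z + -y)
  have he : ∀ y, e y ∈ A := fun y => htrans _ (indicator_periods_mem htrans) (-y)
  have hlevel : ∀ c z, (∏ y ∈ Finset.univ.filter (f · ≠ c), (1 - e y)) z
      = if f z = c then 1 else 0 := by
    intro c z
    rw [Finset.prod_apply]
    split_ifs with hz
    · refine Finset.prod_eq_one fun y hy => ?_
      have hzy : z + -y ∉ H := fun hzy => by
        simp only [Finset.mem_filter] at hy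
        exact hy.2 (by rw [← hz, ← hf _ hzy y, add_comm z, add_neg_cancel_left])
      simp [e, hzy]
    · exact Finset.prod_eq_zero (f := fun y => (1 - e y) z) (i := z) (by simpa using hz)
        (by simp [e, H.zero_mem])
  have hsum : f = ∑ c ∈ Finset.univ.image f,
      c • ∏ y ∈ Finset.univ.filter (f · ≠ c), (1 - e y) := by
    funext z
    simp [Finset.sum_apply, hlevel]
  rw [hsum]
  exact A.sum_mem fun c _ => A.smul_mem (A.prod_mem fun y _ => A.sub_mem A.one_mem (he y)) c

end Translation

namespace Fin

open Fin.NatCast Fin.CommRing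

variable {n : ℕ} [NeZero n]

lemma exists_nsmul_neg_one_eq (g : Fin n) : ∃ m : ℕ, m • (-1 : Fin n) = g :=
  ⟨(-g).val, by rw [smul_neg, nsmul_one, Fin.cast_val_eq_self, neg_neg]⟩

lemma exists_mem_addSubgroup_iff_dvd (H : AddSubgroup (Fin n)) :
    ∃ k, 0 < k ∧ k ∣ n ∧ ∀ h : Fin n, h ∈ H ↔ k ∣ h.val := by
  classical
  have hex : ∃ j : ℕ, 0 < j ∧ (j : Fin n) ∈ H :=
    ⟨n, Nat.pos_of_neZero n, by rw [Fin.natCast_self]; exact H.zero_mem⟩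
  set k := Nat.find hex
  obtain ⟨hk, hkH⟩ : 0 < k ∧ (k : Fin n) ∈ H := Nat.find_spec hex
  have hmem : ∀ j : ℕ, (j : Fin n) ∈ H ↔ k ∣ j := by
    intro j
    constructor
    · intro hj
      have hmod : ((j % k : ℕ) : Fin n) ∈ H := by
        have : ((j % k : ℕ) : Fin n) = j - (j / k) • (k : Fin n) := by
          rw [nsmul_eq_mul, ← Nat.cast_mul, eq_sub_iff_add_eq, ← Nat.cast_add, Nat.mod_add_div']
        rw [this]
        exact H.sub_mem hj (H.nsmul_mem hkH _)
      by_contra hkj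
      exact Nat.find_min hex (Nat.mod_lt j hk)
        ⟨Nat.pos_of_ne_zero (mt Nat.dvd_of_mod_eq_zero hkj), hmod⟩
    · rintro ⟨m, rfl⟩
      rw [Nat.cast_mul, ← nsmul_eq_mul']
      exact H.nsmul_mem hkH m
  refine ⟨k, hk, (hmem n).mp (by rw [Fin.natCast_self]; exact H.zero_mem), fun h => ?_⟩
  rw [← hmem, Fin.cast_val_eq_self]

end Fin

lemma shiftBy_one_eq {F : Type*} [Field F] {n : ℕ} [NeZero n] (c : Fin n → F) :
    shiftBy (1 : F) c = fun i => c (i + -1) := by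
  funext i
  rw [← sub_eq_add_neg, shiftBy]
  split_ifs with h
  · obtain rfl : i = 0 := Fin.ext h
    obtain ⟨m, rfl⟩ := Nat.exists_eq_succ_of_ne_zero (NeZero.ne n)
    rw [one_mul, zero_sub]; congr 1; ext; simp [Fin.coe_neg_one]
  · congr 1; ext; rw [Fin.val_sub_one_of_ne_zero (fun hi => h (by simp [hi]))]

lemma Polynomial.modByMonic_mul_eq_mul_modByMonic {R : Type*} [CommRing R] {p q : R[X]}
    (hp : p.Monic) (hq : q.Monic) (f : R[X]) : (q * f) %ₘ (p * q) = q * (f %ₘ p) := by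
  nontriviality R
  refine (div_modByMonic_unique (f /ₘ p) _ (hp.mul hq) ⟨?_, ?_⟩).2
  · conv_rhs => rw [← modByMonic_add_div f p]
    ring
  · rw [mul_comm q, hq.degree_mul, hq.degree_mul, degree_eq_natDegree hq.ne_zero]
    exact WithBot.add_lt_add_right (WithBot.natCast_ne_bot _) (degree_modByMonic_lt f hp)

section Periodic

variable {F : Type*} [Field F]

lemma degree_toPoly_lt {k : ℕ} (c : Fin k → F) : (toPoly c).degree < k :=
  degree_sum_fin_lt c

lemma coeff_toPoly {k : ℕ} (c : Fin k → F) (s : Fin k) : (toPoly c).coeff s = c s := by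
  simp [toPoly, finsetSum_coeff, Fin.val_inj]

lemma X_pow_sub_one_mul_sum_X_pow_mul {k n : ℕ} (hkn : k ∣ n) :
    (X ^ k - C 1) * ∑ i ∈ Finset.range (n / k), (X : F[X]) ^ (k * i) = X ^ n - C 1 := by
  simp_rw [C_1, pow_mul, mul_comm, geom_sum_mul, ← pow_mul, Nat.mul_div_cancel' hkn]

lemma coeff_sum_X_pow_mul_mul {k n : ℕ} (hk : 0 < k) (hkn : k ∣ n) {r : F[X]}
    (hr : r.degree < k) {i : ℕ} (hi : i < n) :
    ((∑ j ∈ Finset.range (n / k), (X : F[X]) ^ (k * j)) * r).coeff i = r.coeff (i % k) := by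
  have hdiv := Nat.div_add_mod i k
  rw [Finset.sum_mul, finsetSum_coeff, Finset.sum_eq_single (i / k)]
  · rw [coeff_X_pow_mul', if_pos (by omega)]
    congr 1; omega
  · intro j _ hj
    rw [coeff_X_pow_mul']
    split_ifs with hji
    · apply coeff_eq_zero_of_degree_lt (hr.trans_le _)
      have : j < i / k := lt_of_le_of_ne ((Nat.le_div_iff_mul_le hk).mpr (by linarith)) hj
      have : k * (j + 1) ≤ k * (i / k) := Nat.mul_le_mul_left k this
      exact_mod_cast (by rw [mul_add] at this; omega : k ≤ i - k * j)
    · rfl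
  · intro h
    exact absurd (Finset.mem_range.mpr (Nat.div_lt_div_of_lt_of_dvd hkn hi)) h

variable (F) (n k : ℕ)

def periodicSubmodule : Submodule F (Fin n → F) where
  carrier := {v | ∀ i : Fin n, v i = v ⟨i % k, (Nat.mod_le _ _).trans_lt i.isLt⟩}
  add_mem' ha hb i := by simp [ha i, hb i]
  zero_mem' _ := rfl
  smul_mem' c v hv i := by simp [hv i]

variable {F n k}

lemma apply_eq_of_mem_periodicSubmodule {v : Fin n → F} (hv : v ∈ periodicSubmodule F n k)
    {i j : Fin n} (hij : i.val % k = j.val % k) : v i = v j := by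
  rw [hv i, hv j]
  simp only [hij]

lemma one_mem_periodicSubmodule : (1 : Fin n → F) ∈ periodicSubmodule F n k := fun _ => rfl

lemma mul_mem_periodicSubmodule {v w : Fin n → F} (hv : v ∈ periodicSubmodule F n k)
    (hw : w ∈ periodicSubmodule F n k) : v * w ∈ periodicSubmodule F n k := fun i => by
  simp only [Pi.mul_apply, ← hv i, ← hw i]

lemma periodicSubmodule_ne_bot [NeZero n] : periodicSubmodule F n k ≠ ⊥ :=
  (Submodule.ne_bot_iff _).mpr ⟨1, one_mem_periodicSubmodule, one_ne_zero⟩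

lemma mem_periodicSubmodule_iff_forall_add [NeZero n] (hkn : k ∣ n) {v : Fin n → F} :
    v ∈ periodicSubmodule F n k ↔ ∀ h : Fin n, k ∣ h.val → ∀ x, v (x + h) = v x := by
  constructor
  · intro hv h hh x
    refine apply_eq_of_mem_periodicSubmodule hv ?_
    rw [Fin.val_add, Nat.mod_mod_of_dvd _ hkn, Nat.add_mod, Nat.mod_eq_zero_of_dvd hh, add_zero,
      Nat.mod_mod]
  · intro hv i
    have hle : k * (i / k) < n := (Nat.mul_div_le _ _).trans_lt i.isLt
    have hi : i = ⟨i % k, (Nat.mod_le _ _).trans_lt i.isLt⟩ + ⟨k * (i / k), hle⟩ := by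
      ext; simp [Fin.val_add, Nat.mod_add_div, Nat.mod_eq_of_lt i.isLt]
    conv_lhs => rw [hi]
    exact hv _ (Dvd.intro _ rfl) _

lemma shiftBy_mem_periodicSubmodule [NeZero n] (hkn : k ∣ n) {v : Fin n → F}
    (hv : v ∈ periodicSubmodule F n k) : shiftBy (1 : F) v ∈ periodicSubmodule F n k := by
  rw [mem_periodicSubmodule_iff_forall_add hkn] at hv ⊢
  intro h hh x
  simp only [shiftBy_one_eq, add_right_comm x h, hv h hh]

lemma finrank_periodicSubmodule (hk : 0 < k) (hkn : k ≤ n) :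
    Module.finrank F (periodicSubmodule F n k) = k := by
  let φ := LinearMap.funLeft F F (fun i : Fin n => (⟨i % k, Nat.mod_lt _ hk⟩ : Fin k))
  have hφ : Function.Injective φ := LinearMap.funLeft_injective_of_surjective _ _ _
    fun r => ⟨⟨r, r.isLt.trans_le hkn⟩, Fin.ext (Nat.mod_eq_of_lt r.isLt)⟩
  have hrange : LinearMap.range φ = periodicSubmodule F n k := by
    ext v
    constructor
    · rintro ⟨c, rfl⟩ i
      simp [φ, LinearMap.funLeft]
    · intro hv
      refine ⟨fun r => v ⟨r, r.isLt.trans_le hkn⟩, funext fun i => ?_⟩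
      simp [φ, LinearMap.funLeft, ← hv i]
  rw [← hrange, LinearMap.finrank_range_of_inj hφ, Module.finrank_fin_fun]

lemma codeOf_sum_X_pow_mul_eq (hn : 0 < n) (hk : 0 < k) (hkn : k ∣ n) :
    codeOf n (1 : F) (∑ i ∈ Finset.range (n / k), X ^ (k * i)) = periodicSubmodule F n k := by
  have hP : (X ^ k - C 1 : F[X]).Monic := monic_X_pow_sub_C 1 hk.ne'
  have hPm := X_pow_sub_one_mul_sum_X_pow_mul (F := F) hkn
  have hm := hP.of_mul_monic_left (by rw [hPm]; exact monic_X_pow_sub_C 1 hn.ne')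
  ext v
  constructor
  · rintro ⟨h, hv⟩ i
    have hr := degree_modByMonic_lt h hP
    rw [degree_X_pow_sub_C hk] at hr
    simp only [hv, ← hPm, modByMonic_mul_eq_mul_modByMonic hP hm,
      coeff_sum_X_pow_mul_mul hk hkn hr i.isLt,
      coeff_sum_X_pow_mul_mul hk hkn hr ((Nat.mod_le _ _).trans_lt i.isLt), Nat.mod_mod]
  · intro hv
    set c : Fin k → F := fun r => v ⟨r, r.isLt.trans_le (Nat.le_of_dvd hn hkn)⟩
    have hc : toPoly c %ₘ (X ^ k - C 1) = toPoly c :=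
      (modByMonic_eq_self_iff hP).mpr (by rw [degree_X_pow_sub_C hk]; exact degree_toPoly_lt c)
    refine ⟨toPoly c, fun i => ?_⟩
    rw [← hPm, modByMonic_mul_eq_mul_modByMonic hP hm, hc,
      coeff_sum_X_pow_mul_mul hk hkn (degree_toPoly_lt c) i.isLt,
      coeff_toPoly c ⟨i % k, Nat.mod_lt _ hk⟩, hv i]

end Periodic

section Schur

variable {F : Type*} [Field F] {n : ℕ} {W : Submodule F (Fin n → F)}

lemma mul_mem_of_schurPow_two_eq (hW : schurPow W 2 = W) :
    ∀ c ∈ W, ∀ d ∈ W, c * d ∈ W := fun c hc d hd =>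
  hW ▸ Submodule.subset_span ⟨c, hc, d, hd, rfl⟩

lemma schurPow_two_eq_self (hone : (1 : Fin n → F) ∈ W)
    (hmul : ∀ c ∈ W, ∀ d ∈ W, c * d ∈ W) :
    schurPow W 2 = W :=
  le_antisymm (Submodule.span_le.mpr fun _ ⟨c, hc, d, hd, hx⟩ => hx ▸ hmul c hc d hd)
    fun c hc => Submodule.subset_span ⟨c, hc, 1, hone, (mul_one c).symm⟩

lemma exists_eq_periodicSubmodule [Fintype F] (hn : 0 < n)
    (hshift : ∀ c ∈ W, shiftBy (1 : F) c ∈ W) (hne : W ≠ ⊥) (hW : schurPow W 2 = W) :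
    ∃ k, 0 < k ∧ k ∣ n ∧ W = periodicSubmodule F n k := by
  have : NeZero n := ⟨hn.ne'⟩
  have hmul := mul_mem_of_schurPow_two_eq hW
  have htrans : ∀ f ∈ W, ∀ g, (fun x => f (x + g)) ∈ W :=
    forall_add_mem_of_add_mem (S := (W : Set (Fin n → F))) Fin.exists_nsmul_neg_one_eq
      fun f hf => shiftBy_one_eq f ▸ hshift f hf
  let A := W.toSubalgebra (one_mem_of_mul_mem hmul htrans hne) fun c d hc hd => hmul c hc d hd
  obtain ⟨k, hk, hkn, hH⟩ :=
    Fin.exists_mem_addSubgroup_iff_dvd (periods (A : Set (Fin n → F)))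
  refine ⟨k, hk, hkn, Submodule.ext fun f => ?_⟩
  rw [mem_periodicSubmodule_iff_forall_add hkn]
  exact (mem_iff_forall_periods (A := A) htrans).trans (by simp only [hH])

end Schur

theorem stmt15_general {F : Type*} [Field F] [Fintype F] {n : ℕ} (hn : 0 < n) :
    Set.BijOn
      (fun k : ℕ => Submodule.span F (codeOf n (1 : F)
        (∑ i ∈ Finset.range (n / k), X ^ (k * i))))
      {k : ℕ | 0 < k ∧ k ∣ n}
      {W : Submodule F (Fin n → F) |
        (∀ c ∈ W, shiftBy (1 : F) c ∈ W) ∧ W ≠ ⊥ ∧ schurPow W 2 = W} ∧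
    ∀ k : ℕ, 0 < k → k ∣ n →
      Module.finrank F (Submodule.span F (codeOf n (1 : F)
        (∑ i ∈ Finset.range (n / k), X ^ (k * i)))) = k := by
  have : NeZero n := ⟨hn.ne'⟩
  have hspan : ∀ k, 0 < k → k ∣ n → Submodule.span F (codeOf n (1 : F)
      (∑ i ∈ Finset.range (n / k), X ^ (k * i))) = periodicSubmodule F n k := fun k hk hkn => by
    rw [codeOf_sum_X_pow_mul_eq hn hk hkn, Submodule.span_eq]
  have hrank : ∀ k, 0 < k → k ∣ n → Module.finrank F (Submodule.span F (codeOf n (1 : F)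
      (∑ i ∈ Finset.range (n / k), X ^ (k * i)))) = k := fun k hk hkn => by
    rw [hspan k hk hkn, finrank_periodicSubmodule hk (Nat.le_of_dvd hn hkn)]
  refine ⟨⟨?_, ?_, ?_⟩, hrank⟩
  · rintro k ⟨hk, hkn⟩
    simp only [hspan k hk hkn]
    exact ⟨fun c => shiftBy_mem_periodicSubmodule hkn, periodicSubmodule_ne_bot,
      schurPow_two_eq_self one_mem_periodicSubmodule fun _ hc _ hd =>
        mul_mem_periodicSubmodule hc hd⟩
  · rintro k₁ ⟨hk₁, hkn₁⟩ k₂ ⟨hk₂, hkn₂⟩ h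
    simp only at h
    rw [← hrank k₁ hk₁ hkn₁, ← hrank k₂ hk₂ hkn₂, h]
  · rintro W ⟨hshift, hne, hW⟩
    obtain ⟨k, hk, hkn, rfl⟩ := exists_eq_periodicSubmodule hn hshift hne hW
    exact ⟨k, ⟨hk, hkn⟩, hspan k hk hkn⟩

/-- For cyclic codes of length n (char F ∤ n), the map
k ↦ (code generated by m_k(x) = ∑_{i<n/k} x^{ki}) is a bijection between positive divisors
of n and nonzero cyclic codes C with C^{⟨2⟩} = C; the code for divisor k has dimension k. -/
theorem stmt15 {F : Type*} [Field F] [Fintype F] {n : ℕ} (hn : 0 < n)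
    (hchar : (n : F) ≠ 0) :
    Set.BijOn
      (fun k : ℕ => Submodule.span F (codeOf n (1 : F)
        (∑ i ∈ Finset.range (n / k), X ^ (k * i))))
      {k : ℕ | 0 < k ∧ k ∣ n}
      {W : Submodule F (Fin n → F) |
        (∀ c ∈ W, shiftBy (1 : F) c ∈ W) ∧ W ≠ ⊥ ∧ schurPow W 2 = W} ∧
    ∀ k : ℕ, 0 < k → k ∣ n →
      Module.finrank F (Submodule.span F (codeOf n (1 : F)
        (∑ i ∈ Finset.range (n / k), X ^ (k * i)))) = k :=
  stmt15_general hn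
end
end

section
/- Let C ⊆ F^n be a linear code and r(C) its Castelnuovo–Mumford regularity (the least r ≥ 0 with dim C^{⟨r⟩} = dim C^{⟨r+i⟩} for all i ≥ 0). Then for all z with 1 ≤ z ≤ r(C) - 1, dim(C^{⟨z+1⟩}) > dim(C^{⟨z⟩}); i.e., the dimension sequence is strictly increasing until it stabilizes. -/
/-!
Fix z ≥ 1 and an information set `a` of `C^z`: coordinates on which restriction `C^z → F^κ` is
bijective. Every coordinate of `a` lies in the support of `C`, so multiplying by codewords of `C`
keeps the restriction surjective on `C^{z+1}`; hence `dim C^z ≤ dim C^{z+1}`. If equality holds,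
`a` is an information set of `C^{z+1}` too. Let `β_k ∈ C^{z+1}` restrict to the `k`-th unit
vector; then `c * β_k` is `c (a k)` times a vector independent of `c ∈ C`, so `C^{z+2}` is spanned
by `|κ|` vectors and `a` remains an information set. By induction the dimension is constant from
`z` on, so `r ≤ z`.
-/

open Polynomial

noncomputable section

open Module LinearMap Function
open scoped Pointwise

universe u

section InformationSet

variable {F : Type*} {ι : Type u} {κ : Type*} [Field F]

def IsInformationSet (U : Submodule F (ι → F)) (a : κ → ι) : Prop :=
  Bijective ((funLeft F F a).domRestrict U)

theorem IsInformationSet.finrank_eq [Fintype κ] {U : Submodule F (ι → F)} {a : κ → ι}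
    (ha : IsInformationSet U a) : finrank F U = Fintype.card κ :=
  (LinearEquiv.ofBijective _ ha).finrank_eq.trans (finrank_fintype_fun_eq_card F)

theorem isInformationSet_of_surjective [Finite ι] [Fintype κ] {U : Submodule F (ι → F)}
    {a : κ → ι} (hsurj : Surjective ((funLeft F F a).domRestrict U))
    (hle : finrank F U ≤ Fintype.card κ) : IsInformationSet U a :=
  OrzechProperty.bijective_of_surjective_of_finrank_le _ hsurj
    (hle.trans (finrank_fintype_fun_eq_card F).ge)

/-- A linearly independent subfamily of the coordinate functionals on `U`, with the same span,
picks out the coordinates. -/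
theorem exists_isInformationSet [Finite ι] (U : Submodule F (ι → F)) :
    ∃ (κ : Type u) (_ : Fintype κ) (a : κ → ι), IsInformationSet U a := by
  let φ : ι → Dual F U := fun i => (proj i).comp U.subtype
  obtain ⟨κ, a, -, hspan, hli⟩ := exists_linearIndependent' F φ
  have := hli.finite
  let _ : Fintype κ := Fintype.ofFinite κ
  have hinj : Injective ((funLeft F F a).domRestrict U) := by
    rw [← ker_eq_bot, eq_bot_iff]
    intro u hu
    have hφa : Set.range (φ ∘ a) ⊆ ker (Dual.eval F U u) := by
      rintro _ ⟨k, rfl⟩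
      exact congrFun hu k
    have hφ : ∀ i, φ i ∈ ker (Dual.eval F U u) := fun i =>
      Submodule.span_le.mpr hφa (hspan ▸ Submodule.subset_span ⟨i, rfl⟩)
    exact (Submodule.mem_bot F).mpr (Subtype.ext (funext hφ))
  have hcard : finrank F U = finrank F (κ → F) :=
    le_antisymm (finrank_le_finrank_of_injective hinj) ((finrank_fintype_fun_eq_card F).trans_le
      (hli.fintype_card_le_finrank.trans Subspace.dual_finrank_eq.le))
  exact ⟨κ, inferInstance, a, hinj, (injective_iff_surjective_of_finrank_eq_finrank hcard).mp hinj⟩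

theorem funLeft_mul_of_funLeft_eq_single [DecidableEq κ] {a : κ → ι} {v : ι → F} {k : κ}
    (hv : funLeft F F a v = Pi.single k 1) (c : ι → F) :
    funLeft F F a (c * v) = c (a k) • Pi.single k 1 := by
  ext j
  have hvj := congrFun hv j
  simp only [funLeft_apply] at hvj ⊢
  by_cases hj : j = k
  · subst hj; simp [hvj]
  · simp [hvj, hj]

theorem surjective_funLeft_domRestrict_mul [Finite κ] {C V : Submodule F (ι → F)} {a : κ → ι}
    (hC : ∀ k, ∃ c ∈ C, c (a k) ≠ 0) (hV : Surjective ((funLeft F F a).domRestrict V)) :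
    Surjective ((funLeft F F a).domRestrict (C * V)) := by
  classical
  rw [← range_eq_top, range_domRestrict, eq_top_iff, ← (Pi.basisFun F κ).span_eq,
    Submodule.span_le]
  rintro _ ⟨k, rfl⟩
  obtain ⟨⟨v, hv⟩, hvk⟩ := hV (Pi.single k 1)
  obtain ⟨c, hc, hck⟩ := hC k
  refine ⟨(c (a k))⁻¹ • (c * v), Submodule.smul_mem _ _ (Submodule.mul_mem_mul hc hv), ?_⟩
  rw [Pi.basisFun_apply, map_smul, funLeft_mul_of_funLeft_eq_single (a := a) hvk, smul_smul,
    inv_mul_cancel₀ hck, one_smul]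

theorem finrank_mul_mul_le_card [Finite ι] [Fintype κ] {C V : Submodule F (ι → F)} {a : κ → ι}
    (hC : ∀ k, ∃ c ∈ C, c (a k) ≠ 0) (hV : Surjective ((funLeft F F a).domRestrict V))
    (hCV : Injective ((funLeft F F a).domRestrict (C * V))) :
    finrank F (C * (C * V)) ≤ Fintype.card κ := by
  classical
  have hinj : ∀ x ∈ C * V, ∀ y ∈ C * V, funLeft F F a x = funLeft F F a y → x = y :=
    fun x hx y hy h => congrArg Subtype.val (@hCV ⟨x, hx⟩ ⟨y, hy⟩ h)
  have hV' : ∀ k, ∃ v ∈ V, funLeft F F a v = Pi.single k 1 := fun k =>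
    let ⟨⟨v, hv⟩, hvk⟩ := hV (Pi.single k 1)
    ⟨v, hv, hvk⟩
  have hC' : ∀ k, ∃ c ∈ C, c (a k) = 1 := fun k =>
    let ⟨c, hc, hck⟩ := hC k
    ⟨(c (a k))⁻¹ • c, C.smul_mem _ hc, inv_mul_cancel₀ hck⟩
  choose v hvV hv using hV'
  choose c hcC hc using hC'
  set β : κ → ι → F := fun k => c k * v k with hβ_def
  have hβ : ∀ k, β k ∈ C * V := fun k => Submodule.mul_mem_mul (hcC k) (hvV k)
  have hρβ : ∀ k, funLeft F F a (β k) = Pi.single k 1 := fun k => by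
    rw [funLeft_mul_of_funLeft_eq_single (hv k), hc, one_smul]
  have hmul_v : ∀ d ∈ C, ∀ k, d * v k = d (a k) • β k := fun d hd k =>
    hinj _ (Submodule.mul_mem_mul hd (hvV k)) _ (Submodule.smul_mem _ _ (hβ k)) (by
      rw [funLeft_mul_of_funLeft_eq_single (hv k), map_smul, hρβ])
  have hspan : C * V ≤ Submodule.span F (Set.range β) := by
    intro w hw
    have hw_eq : w = ∑ k, w (a k) • β k :=
      hinj _ hw _ (Submodule.sum_mem _ fun k _ => Submodule.smul_mem _ _ (hβ k)) (by
        simp only [map_sum, map_smul, hρβ]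
        ext j
        simp [funLeft_apply, Pi.single_apply])
    rw [hw_eq]
    exact Submodule.sum_mem _ fun k _ => Submodule.smul_mem _ _ (Submodule.subset_span ⟨k, rfl⟩)
  -- `d * β k = c k * (d * v k)`: the normaliser `c k` absorbs the dependence on `d`.
  have hmul_β : ∀ d ∈ C, ∀ k, d * β k = d (a k) • (c k * β k) := fun d hd k => by
    rw [hβ_def, mul_left_comm, hmul_v d hd k, mul_smul_comm]
  have hle : C * (C * V) ≤ Submodule.span F (Set.range fun k => c k * β k) := by
    calc C * (C * V) ≤ C * Submodule.span F (Set.range β) := mul_le_mul_right hspan C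
      _ = Submodule.span F ((C : Set (ι → F)) * Set.range β) := by
        rw [← Submodule.span_mul_span, Submodule.span_eq]
      _ ≤ _ := by
        rw [Submodule.span_le]
        rintro _ ⟨d, hd, _, ⟨k, rfl⟩, rfl⟩
        change d * β k ∈ _
        rw [hmul_β d hd k]
        exact Submodule.smul_mem _ _ (Submodule.subset_span ⟨k, rfl⟩)
  exact (Submodule.finrank_mono hle).trans (finrank_range_le_card _)

theorem IsInformationSet.mul_mul [Finite ι] [Fintype κ] {C V : Submodule F (ι → F)} {a : κ → ι}
    (hC : ∀ k, ∃ c ∈ C, c (a k) ≠ 0) (hV : IsInformationSet V a)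
    (hCV : IsInformationSet (C * V) a) : IsInformationSet (C * (C * V)) a :=
  isInformationSet_of_surjective (surjective_funLeft_domRestrict_mul hC hCV.2)
    (finrank_mul_mul_le_card hC hV.2 hCV.1)

end InformationSet

section Powers

variable {F : Type*} {ι : Type u} [Field F] (W : Submodule F (ι → F))

theorem exists_mem_apply_ne_zero_of_mem_pow {t : ℕ} (ht : t ≠ 0) {x : ι → F} (hx : x ∈ W ^ t)
    {i : ι} (hxi : x i ≠ 0) : ∃ c ∈ W, c i ≠ 0 := by
  obtain ⟨s, rfl⟩ := Nat.exists_eq_succ_of_ne_zero ht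
  by_contra! hW
  have hle : W ^ (s + 1) ≤ ker (proj i) := by
    rw [pow_succ, Submodule.mul_le]
    intro m _ c hc
    simp [hW c hc]
  exact hxi (hle hx)

variable {W}

theorem IsInformationSet.exists_mem_apply_ne_zero_of_pow {κ : Type*} {a : κ → ι} {t : ℕ}
    (ht : t ≠ 0) (ha : IsInformationSet (W ^ t) a) (k : κ) : ∃ c ∈ W, c (a k) ≠ 0 := by
  classical
  obtain ⟨⟨v, hv⟩, hvk⟩ := ha.2 (Pi.single k 1)
  refine exists_mem_apply_ne_zero_of_mem_pow W ht hv (i := a k) ?_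
  have := congrFun hvk k
  simp_all [funLeft_apply]

theorem surjective_funLeft_domRestrict_pow_add {κ : Type*} [Finite κ] {a : κ → ι} {z : ℕ}
    (hW : ∀ k, ∃ c ∈ W, c (a k) ≠ 0) (hz : Surjective ((funLeft F F a).domRestrict (W ^ z))) :
    ∀ i, Surjective ((funLeft F F a).domRestrict (W ^ (z + i)))
  | 0 => hz
  | i + 1 => by
    rw [← add_assoc, pow_succ']
    exact surjective_funLeft_domRestrict_mul hW (surjective_funLeft_domRestrict_pow_add hW hz i)

variable [Finite ι]

theorem finrank_pow_le_finrank_pow_succ {z : ℕ} (hz : z ≠ 0) :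
    finrank F ↥(W ^ z) ≤ finrank F ↥(W ^ (z + 1)) := by
  obtain ⟨κ, _, a, ha⟩ := exists_isInformationSet (W ^ z)
  rw [ha.finrank_eq, ← finrank_fintype_fun_eq_card F]
  exact finrank_le_finrank_of_surjective
    (surjective_funLeft_domRestrict_pow_add (ha.exists_mem_apply_ne_zero_of_pow hz) ha.2 1)

theorem finrank_pow_add_eq_of_finrank_pow_succ_eq {z : ℕ} (hz : z ≠ 0)
    (h : finrank F ↥(W ^ (z + 1)) = finrank F ↥(W ^ z)) (i : ℕ) :
    finrank F ↥(W ^ (z + i)) = finrank F ↥(W ^ z) := by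
  obtain ⟨κ, _, a, ha⟩ := exists_isInformationSet (W ^ z)
  have hW := ha.exists_mem_apply_ne_zero_of_pow hz
  have hsucc : IsInformationSet (W ^ (z + 1)) a :=
    isInformationSet_of_surjective (surjective_funLeft_domRestrict_pow_add hW ha.2 1)
      (h.trans ha.finrank_eq).le
  have hall : ∀ i, IsInformationSet (W ^ (z + i)) a ∧ IsInformationSet (W ^ (z + i + 1)) a := by
    intro i
    induction i with
    | zero => exact ⟨ha, hsucc⟩
    | succ i ih =>
      have h2 := ih.1.mul_mul hW (by rw [← pow_succ']; exact ih.2)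
      rw [← pow_succ', ← pow_succ'] at h2
      exact ⟨ih.2, h2⟩
  rw [(hall i).1.finrank_eq, ha.finrank_eq]

end Powers

theorem schurPow_eq_pow {F : Type*} [Field F] {n : ℕ} (W : Submodule F (Fin n → F)) :
    ∀ {t : ℕ}, t ≠ 0 → schurPow W t = W ^ t
  | 1, _ => (pow_one W).symm
  | s + 2, _ => by
    rw [pow_succ', ← schurPow_eq_pow W s.succ_ne_zero, Submodule.mul_eq_span_mul_set]
    simp only [schurPow]
    congr 1
    ext x
    rw [Set.mem_ofPred_eq, Set.mem_mul]
    simp only [SetLike.mem_coe, eq_comm]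

theorem stmt16_general {F : Type*} [Field F] {n : ℕ}
    (W : Submodule F (Fin n → F)) (r : ℕ)
    (hr : IsLeast {s : ℕ | ∀ i : ℕ,
      Module.finrank F (schurPow W s) = Module.finrank F (schurPow W (s + i))} r) :
    ∀ z : ℕ, 1 ≤ z → z ≤ r - 1 →
      Module.finrank F (schurPow W z) < Module.finrank F (schurPow W (z + 1)) := by
  intro z hz hzr
  have hz0 : z ≠ 0 := Nat.one_le_iff_ne_zero.mp hz
  rw [schurPow_eq_pow W hz0, schurPow_eq_pow W z.succ_ne_zero]
  refine (finrank_pow_le_finrank_pow_succ hz0).lt_of_ne fun heq => ?_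
  have hstable : ∀ i : ℕ,
      Module.finrank F (schurPow W z) = Module.finrank F (schurPow W (z + i)) := fun i => by
    rw [schurPow_eq_pow W hz0, schurPow_eq_pow W (by omega),
      finrank_pow_add_eq_of_finrank_pow_succ_eq hz0 heq.symm]
  have hrz : r ≤ z := hr.2 hstable
  omega

/-- If r is the Castelnuovo–Mumford regularity of a nonzero linear code C
(the least r with dim C^{⟨r⟩} = dim C^{⟨r+i⟩} for all i), then the dimension sequence is
strictly increasing before r: for 1 ≤ z ≤ r - 1, dim C^{⟨z⟩} < dim C^{⟨z+1⟩}. -/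
theorem stmt16 {F : Type*} [Field F] [Fintype F] {n : ℕ}
    (W : Submodule F (Fin n → F)) (hW : W ≠ ⊥) (r : ℕ)
    (hr : IsLeast {s : ℕ | ∀ i : ℕ,
      Module.finrank F (schurPow W s) = Module.finrank F (schurPow W (s + i))} r) :
    ∀ z : ℕ, 1 ≤ z → z ≤ r - 1 →
      Module.finrank F (schurPow W z) < Module.finrank F (schurPow W (z + 1)) :=
  stmt16_general W r hr
end
end

section
/- Let C ⊆ F^n be a linear code and z ≥ 1. If C^{⟨z⟩} is spanned by a basis of codewords with pairwise disjoint supports, then dim(C^{⟨z⟩}) = dim(C^{⟨z+1⟩}). -/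
open Polynomial

noncomputable section

/-!
Let `b₁, …, b_k` be the disjoint-support basis of `C^⟨z⟩` and `Sᵢ` the support of `bᵢ`. Every
vector of `C^⟨z⟩` is a multiple of `bᵢ` on `Sᵢ`. Pick `uᵢ ∈ C` not vanishing at some point of
`Sᵢ`; since `w * uᵢ ^ (z - 1)` and `uᵢ ^ z` lie in `C^⟨z⟩` for every `w ∈ C`, dividing shows
that `w` is a multiple of `uᵢ` on `Sᵢ`, so `w * bᵢ ∈ F ∙ (uᵢ * bᵢ)`. Hence the vectors
`uᵢ * bᵢ`, which again have pairwise disjoint supports and are nonzero, form a basis of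
`C^⟨z+1⟩`.
-/

open Submodule

section DisjointSupports

variable {F ι κ : Type*} [Field F] [Fintype κ] {b : κ → ι → F}

theorem sum_smul_apply_of_pairwise (hdisj : Pairwise fun i j => ∀ m, b i m = 0 ∨ b j m = 0)
    (f : κ → F) {i : κ} {m : ι} (hm : b i m ≠ 0) : (∑ j, f j • b j) m = f i * b i m := by
  simp only [Finset.sum_apply, Pi.smul_apply, smul_eq_mul]
  refine Finset.sum_eq_single i (fun j _ hji => ?_) (by simp)
  rcases hdisj hji m with h | h
  · simp [h]
  · exact absurd h hm

theorem exists_eq_mul_of_mem_span_of_pairwise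
    (hdisj : Pairwise fun i j => ∀ m, b i m = 0 ∨ b j m = 0)
    {v : ι → F} (hv : v ∈ span F (Set.range b)) (i : κ) :
    ∃ μ : F, ∀ m, b i m ≠ 0 → v m = μ * b i m := by
  obtain ⟨f, rfl⟩ := mem_span_range_iff_exists_fun F |>.mp hv
  exact ⟨f i, fun m hm => sum_smul_apply_of_pairwise hdisj f hm⟩

theorem linearIndependent_of_pairwise (hdisj : Pairwise fun i j => ∀ m, b i m = 0 ∨ b j m = 0)
    (hne : ∀ i, b i ≠ 0) : LinearIndependent F b := by
  refine Fintype.linearIndependent_iff.mpr fun f hf i => ?_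
  obtain ⟨m, hm⟩ := Function.ne_iff.mp (hne i)
  have hsum := congrFun hf m
  rw [sum_smul_apply_of_pairwise hdisj f hm, Pi.zero_apply] at hsum
  exact (mul_eq_zero.mp hsum).resolve_right hm

end DisjointSupports

theorem exists_mul_eq_smul_mul {F ι : Type*} [Field F] {s u w : ι → F} {x : ℕ} {α β : F}
    {m₀ : ι} (hs : s m₀ ≠ 0) (hu : u m₀ ≠ 0)
    (hw : ∀ m, s m ≠ 0 → w m * u m ^ x = α * s m)
    (hβ : ∀ m, s m ≠ 0 → u m * u m ^ x = β * s m) :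
    ∃ μ : F, w * s = μ • (u * s) := by
  have hβ0 : β ≠ 0 := by
    rintro rfl
    simpa [hs, hu] using hβ m₀ hs
  refine ⟨α / β, funext fun m => ?_⟩
  by_cases hsm : s m = 0
  · simp [hsm]
  simp only [Pi.mul_apply, Pi.smul_apply, smul_eq_mul]
  rw [div_mul_eq_mul_div, eq_div_iff hβ0]
  linear_combination u m * hw m hsm - w m * hβ m hsm

section SchurPow

variable {F : Type*} [Field F] {n : ℕ} {W : Submodule F (Fin n → F)}

theorem schurPow_succ_succ (x : ℕ) :
    schurPow W (x + 1 + 1) = span F {v | ∃ c ∈ W, ∃ d ∈ schurPow W (x + 1), v = c * d} :=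
  rfl

theorem mul_pow_mem_schurPow {c u : Fin n → F} (hc : c ∈ W) (hu : u ∈ W) :
    ∀ x : ℕ, c * u ^ x ∈ schurPow W (x + 1)
  | 0 => by rw [pow_zero, mul_one]; exact hc
  | x + 1 => by
    rw [pow_succ', mul_left_comm]
    exact subset_span ⟨u, hu, _, mul_pow_mem_schurPow hc hu x, rfl⟩

theorem exists_mem_apply_ne_zero_of_mem_schurPow {y : ℕ} {v : Fin n → F}
    (hv : v ∈ schurPow W (y + 1)) {m : Fin n} (hvm : v m ≠ 0) : ∃ u ∈ W, u m ≠ 0 := by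
  by_contra! hW
  suffices h : ∀ y, schurPow W (y + 1) ≤ LinearMap.ker (LinearMap.proj m) from
    hvm (h y hv)
  intro y
  induction y with
  | zero => exact fun u hu => hW u hu
  | succ y _ =>
    rw [schurPow_succ_succ, span_le]
    rintro _ ⟨c, hc, d, -, rfl⟩
    simp [hW c hc]

variable {x k : ℕ} {b : Fin k → Fin n → F}
  (hspan : span F (Set.range b) = schurPow W (x + 1))
  (hdisj : Pairwise fun i j => ∀ m, b i m = 0 ∨ b j m = 0)
include hspan hdisj

theorem exists_mul_basis_eq_smul {u w : Fin n → F} {i : Fin k} {m : Fin n} (hu : u ∈ W)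
    (hum : u m ≠ 0) (hbm : b i m ≠ 0) (hw : w ∈ W) : ∃ μ : F, w * b i = μ • (u * b i) := by
  have multiple_of_b {c : Fin n → F} (hc : c ∈ W) :
      ∃ α : F, ∀ m, b i m ≠ 0 → c m * u m ^ x = α * b i m := by
    obtain ⟨α, hα⟩ := exists_eq_mul_of_mem_span_of_pairwise hdisj
      (hspan ▸ mul_pow_mem_schurPow hc hu x) i
    exact ⟨α, fun m hm => by simpa using hα m hm⟩
  obtain ⟨α, hα⟩ := multiple_of_b hw
  obtain ⟨β, hβ⟩ := multiple_of_b hu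
  exact exists_mul_eq_smul_mul hbm hum hα hβ

theorem schurPow_succ_succ_eq_span {u : Fin k → Fin n → F} {m : Fin k → Fin n}
    (hu : ∀ i, u i ∈ W) (hum : ∀ i, u i (m i) ≠ 0) (hbm : ∀ i, b i (m i) ≠ 0) :
    schurPow W (x + 1 + 1) = span F (Set.range fun i => u i * b i) := by
  refine le_antisymm ?_ (span_le.mpr ?_)
  · rw [schurPow_succ_succ, span_le]
    rintro _ ⟨c, hc, d, hd, rfl⟩
    obtain ⟨f, rfl⟩ := mem_span_range_iff_exists_fun F |>.mp (hspan ▸ hd)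
    rw [Finset.mul_sum]
    refine sum_mem fun j _ => ?_
    obtain ⟨μ, hμ⟩ := exists_mul_basis_eq_smul hspan hdisj (hu j) (hum j) (hbm j) hc
    rw [mul_smul_comm, hμ, smul_smul]
    exact smul_mem _ _ (subset_span ⟨j, rfl⟩)
  · rintro _ ⟨i, rfl⟩
    exact subset_span ⟨u i, hu i, b i, hspan ▸ subset_span ⟨i, rfl⟩, rfl⟩

end SchurPow

theorem stmt17_general {F : Type*} [Field F] {n : ℕ}
    (W : Submodule F (Fin n → F)) (z : ℕ) (hz : 1 ≤ z)
    (hbasis : ∃ (k : ℕ) (b : Fin k → Fin n → F),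
      LinearIndependent F b ∧
      Submodule.span F (Set.range b) = schurPow W z ∧
      ∀ i j : Fin k, i ≠ j → ∀ m : Fin n, b i m = 0 ∨ b j m = 0) :
    Module.finrank F (schurPow W z) = Module.finrank F (schurPow W (z + 1)) := by
  obtain ⟨k, b, hli, hspan, hdisj⟩ := hbasis
  obtain ⟨x, rfl⟩ : ∃ x, z = x + 1 := ⟨z - 1, by omega⟩
  choose m hbm using fun i => Function.ne_iff.mp (hli.ne_zero i)
  choose u hu hum using fun i =>
    exists_mem_apply_ne_zero_of_mem_schurPow (hspan ▸ subset_span (Set.mem_range_self i))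
      (hbm i)
  have hli_mul : LinearIndependent F fun i => u i * b i :=
    linearIndependent_of_pairwise
      (fun i j hij m => (hdisj i j hij m).imp (fun h => by simp [h]) (fun h => by simp [h]))
      (fun i => Function.ne_iff.mpr ⟨m i, mul_ne_zero (hum i) (hbm i)⟩)
  rw [schurPow_succ_succ_eq_span hspan hdisj hu hum hbm, ← hspan, finrank_span_eq_card hli,
    finrank_span_eq_card hli_mul]

/-- If C^{⟨z⟩} (z ≥ 1) is spanned by a basis of codewords with pairwise
disjoint supports, then dim C^{⟨z⟩} = dim C^{⟨z+1⟩}. -/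
theorem stmt17 {F : Type*} [Field F] [Fintype F] {n : ℕ}
    (W : Submodule F (Fin n → F)) (z : ℕ) (hz : 1 ≤ z)
    (hbasis : ∃ (k : ℕ) (b : Fin k → Fin n → F),
      LinearIndependent F b ∧
      Submodule.span F (Set.range b) = schurPow W z ∧
      ∀ i j : Fin k, i ≠ j → ∀ m : Fin n, b i m = 0 ∨ b j m = 0) :
    Module.finrank F (schurPow W z) = Module.finrank F (schurPow W (z + 1)) :=
  stmt17_general W z hz hbasis
end
end

section
/- Let C ⊆ F^n be a constacyclic code with modulus x^n - a, whose generator g(x) of degree n-k has pattern polynomial p(x) of degree n - v (so v | n). Then every codeword c ∈ C can be written as c(x) = ∑_{z=0}^{v-1} d_z x^z p(x) and satisfies wt(c) = (n/v)·|{z : d_z ≠ 0}|; in particular, the Hamming weight of every codeword of C is a multiple of n/v. -/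
open Polynomial

noncomputable section

/-- p has the shape of a pattern polynomial for length n, modulus x^n - a, with parameter v:
v ∣ n and p = ∑_{j<n/v} d^j x^{vj} with d^{-(n/v)} = a (equivalently, the coefficient
vectors of x^i p for 0 ≤ i < v have pairwise disjoint supports). -/
def isPatternShape {F : Type*} [Field F] (n v : ℕ) (a : F) (p : Polynomial F) : Prop :=
  0 < v ∧ v ∣ n ∧ ∃ d : F, d ≠ 0 ∧ d ^ (n / v) = a⁻¹ ∧
    p = ∑ j ∈ Finset.range (n / v), Polynomial.C (d ^ j) * Polynomial.X ^ (v * j)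

/-- p is the pattern polynomial of g: it has pattern shape, divides g, and has the highest
degree among all such polynomials. -/
def isPattern {F : Type*} [Field F] (n : ℕ) (a : F) (g p : Polynomial F) (v : ℕ) : Prop :=
  isPatternShape n v a p ∧ p ∣ g ∧
    ∀ (v2 : ℕ) (p2 : Polynomial F), isPatternShape n v2 a p2 → p2 ∣ g →
      p2.natDegree ≤ p.natDegree
/-- For a constacyclic code generated by g with pattern polynomial p of
degree n - v, every codeword c can be written as c(x) = ∑_{z<v} e_z x^z p(x), and its
Hamming weight equals (n/v)·|{z : e_z ≠ 0}|, a multiple of n/v. -/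
theorem stmt19 {F : Type*} [Field F] [Fintype F] {n v : ℕ} (hn : 0 < n)
    (a : F) (ha : a ≠ 0)
    (g : F[X]) (hgdvd : g ∣ X ^ n - C a) (hg0 : g.eval 0 = 1)
    (p : F[X]) (hp : isPattern n a g p v)
    (h : F[X]) (c : Fin n → F)
    (hc : ∀ i : Fin n, c i = ((g * h) %ₘ (X ^ n - C a)).coeff i) :
    ∃ e : ℕ → F,
      ((g * h) %ₘ (X ^ n - C a)) = ∑ z ∈ Finset.range v, C (e z) * X ^ z * p ∧
      wt c = (n / v) * {z | z < v ∧ e z ≠ 0}.ncard ∧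
      (n / v) ∣ wt c := by
  classical
  obtain ⟨⟨hv, hvn, d, hd, hdpow, hpdef⟩, hpg, -⟩ := hp
  set N := n / v with hN
  have hvN : v * N = n := Nat.mul_div_cancel' hvn
  have hNpos : 0 < N := Nat.div_pos (Nat.le_of_dvd hn hvn) hv
  have hvlen : v ≤ n := Nat.le_of_dvd hn hvn
  set m : F[X] := X ^ n - C a with hm
  have hmonic : m.Monic := monic_X_pow_sub_C a hn.ne'
  -- telescoping identity
  have key : (C d * X ^ v - 1) * p = C a⁻¹ * X ^ n - 1 := by
    have hterm : ∀ j ∈ Finset.range N,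
        (C d * X ^ v - 1) * (C (d ^ j) * X ^ (v * j))
          = C (d ^ (j + 1)) * X ^ (v * (j + 1)) - C (d ^ j) * X ^ (v * j) := by
      intro j _
      have h1 : v * (j + 1) = v * j + v := by ring
      rw [h1, pow_succ, pow_add, map_mul]
      ring
    rw [hpdef, Finset.mul_sum, Finset.sum_congr rfl hterm, Finset.sum_range_sub
      (fun j => C (d ^ j) * X ^ (v * j))]
    simp [hdpow, hvN]
  have hCa : (C a : F[X]) * C a⁻¹ = 1 := by
    rw [← C_mul, mul_inv_cancel₀ ha, C_1]
  have hpm : p ∣ m := by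
    refine ⟨C a * (C d * X ^ v - 1), ?_⟩
    rw [hm]
    linear_combination (-(C a) : F[X]) * key - X ^ n * hCa
  set r : F[X] := (g * h) %ₘ m with hr
  have hpr : p ∣ r := by
    rw [hr, modByMonic_eq_sub_mul_div (g * h) m]
    exact dvd_sub (hpg.mul_right h) (hpm.mul_right _)
  obtain ⟨s, hs⟩ := hpr
  -- p has a nonzero coefficient at v*(N-1)
  have hcoefftop : p.coeff (v * (N - 1)) = d ^ (N - 1) := by
    rw [hpdef, finset_sum_coeff]
    rw [Finset.sum_eq_single (N - 1)]
    · rw [coeff_C_mul, coeff_X_pow, if_pos rfl, mul_one]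
    · intro j _ hne
      have hvne : v * (N - 1) ≠ v * j := fun hEq =>
        hne (Nat.eq_of_mul_eq_mul_left hv hEq).symm
      rw [coeff_C_mul, coeff_X_pow, if_neg hvne, mul_zero]
    · intro hmem
      exact absurd (Finset.mem_range.mpr (Nat.sub_lt hNpos one_pos)) hmem
  have hpne : p ≠ 0 := by
    intro h0
    rw [h0, coeff_zero] at hcoefftop
    exact pow_ne_zero _ hd hcoefftop.symm
  have hdegp : n - v ≤ p.natDegree := by
    have h1 : v * (N - 1) ≤ p.natDegree :=
      le_natDegree_of_ne_zero (by rw [hcoefftop]; exact pow_ne_zero _ hd)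
    have h2 : v * (N - 1) + v = n := by
      calc v * (N - 1) + v = v * ((N - 1) + 1) := (Nat.mul_succ v (N - 1)).symm
        _ = v * N := by congr 1; omega
        _ = n := hvN
    omega
  have hrdeg : r.degree < (n : WithBot ℕ) := by
    have := degree_modByMonic_lt (g * h) hmonic
    rwa [hm, degree_X_pow_sub_C hn a] at this
  have hse : s.natDegree < v := by
    rcases eq_or_ne s 0 with h0 | h0
    · simp [h0, hv]
    · have hr0 : r ≠ 0 := by rw [hs]; exact mul_ne_zero hpne h0
      have h1 : r.natDegree < n := (natDegree_lt_iff_degree_lt hr0).mpr hrdeg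
      have h2 : r.natDegree = p.natDegree + s.natDegree := by
        rw [hs, natDegree_mul hpne h0]
      omega
  have hsum : s = ∑ z ∈ Finset.range v, C (s.coeff z) * X ^ z := by
    conv_lhs => rw [s.as_sum_range' v hse]
    exact Finset.sum_congr rfl fun z _ => (C_mul_X_pow_eq_monomial).symm
  have hfirst : r = ∑ z ∈ Finset.range v, C (s.coeff z) * X ^ z * p := by
    rw [hs]
    conv_lhs => rw [hsum]
    rw [Finset.mul_sum]
    exact Finset.sum_congr rfl fun z _ => mul_comm _ _
  -- coefficient formula
  have hcoeff : ∀ i : ℕ, i < n → r.coeff i = s.coeff (i % v) * d ^ (i / v) := by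
    intro i hi
    have expand : r = ∑ z ∈ Finset.range v, ∑ j ∈ Finset.range N,
        (monomial (z + v * j) (s.coeff z * d ^ j)) := by
      rw [hfirst, hpdef]
      refine Finset.sum_congr rfl fun z _ => ?_
      rw [Finset.mul_sum]
      refine Finset.sum_congr rfl fun j _ => ?_
      rw [← C_mul_X_pow_eq_monomial, pow_add, map_mul]
      ring
    rw [expand]
    simp only [finset_sum_coeff, coeff_monomial]
    rw [Finset.sum_eq_single (i % v)]
    · rw [Finset.sum_eq_single (i / v)]
      · rw [if_pos (Nat.mod_add_div i v)]
      · intro j _ hne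
        rw [if_neg]
        intro hEq
        have h3 : i % v + v * j = i % v + v * (i / v) :=
          hEq.trans (Nat.mod_add_div i v).symm
        exact hne (Nat.eq_of_mul_eq_mul_left hv (Nat.add_left_cancel h3))
      · intro hnm
        exact absurd (Finset.mem_range.mpr (Nat.div_lt_div_of_lt_of_dvd hvn hi)) hnm
    · intro z hz hne
      refine Finset.sum_eq_zero fun j _ => ?_
      rw [if_neg]
      intro hEq
      apply hne
      have hzv : (z + v * j) % v = z := by
        rw [Nat.add_mul_mod_self_left]
        exact Nat.mod_eq_of_lt (Finset.mem_range.mp hz)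
      rw [← hEq, hzv]
    · intro hnm
      exact absurd (Finset.mem_range.mpr (Nat.mod_lt i hv)) hnm
  have hcne : ∀ i : Fin n, (c i ≠ 0 ↔ s.coeff ((i : ℕ) % v) ≠ 0) := by
    intro i
    rw [hc i, hcoeff i i.isLt]
    simp [mul_ne_zero_iff, pow_ne_zero _ hd]
  -- counting
  set T : Finset ℕ := (Finset.range v).filter (fun z => s.coeff z ≠ 0) with hT
  have hwt : wt c = N * T.card := by
    rw [wt, Set.ncard_eq_toFinset_card', Set.toFinset_setOf]
    rw [show N * T.card = (Finset.range N ×ˢ T).card by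
      rw [Finset.card_product, Finset.card_range]]
    refine Finset.card_bij' (fun i _ => ((i : ℕ) / v, (i : ℕ) % v))
      (fun b hb => ⟨v * b.1 + b.2, ?_⟩) ?_ ?_ ?_ ?_
    · rcases Finset.mem_product.mp hb with ⟨h1, h2⟩
      have hj : b.1 < N := Finset.mem_range.mp h1
      have hz : b.2 < v := Finset.mem_range.mp (Finset.mem_filter.mp h2).1
      calc v * b.1 + b.2 < v * b.1 + v := by omega
        _ = v * (b.1 + 1) := by ring
        _ ≤ v * N := Nat.mul_le_mul_left v (by omega)
        _ = n := hvN
    · intro i hi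
      have hci : c i ≠ 0 := by simpa using (Finset.mem_filter.mp hi).2
      refine Finset.mem_product.mpr ⟨Finset.mem_range.mpr
        (Nat.div_lt_div_of_lt_of_dvd hvn i.isLt), Finset.mem_filter.mpr
        ⟨Finset.mem_range.mpr (Nat.mod_lt _ hv), (hcne i).mp hci⟩⟩
    · intro b hb
      rcases Finset.mem_product.mp hb with ⟨_, h2⟩
      rcases Finset.mem_filter.mp h2 with ⟨h3, h4⟩
      have hz : b.2 < v := Finset.mem_range.mp h3
      refine Finset.mem_filter.mpr ⟨Finset.mem_univ _, ?_⟩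
      simp only [ne_eq]
      refine (hcne _).mpr ?_
      have hmod : (v * b.1 + b.2) % v = b.2 := by
        rw [Nat.mul_add_mod, Nat.mod_eq_of_lt hz]
      rw [hmod]; exact h4
    · intro i _
      exact Fin.ext (Nat.div_add_mod (i : ℕ) v)
    · intro b hb
      rcases Finset.mem_product.mp hb with ⟨_, h2⟩
      have hz : b.2 < v := Finset.mem_range.mp (Finset.mem_filter.mp h2).1
      refine Prod.ext ?_ ?_
      · simp [Nat.mul_add_div hv, Nat.div_eq_of_lt hz]
      · show (v * b.1 + b.2) % v = b.2
        rw [Nat.mul_add_mod, Nat.mod_eq_of_lt hz]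
  refine ⟨fun z => s.coeff z, hfirst, ?_, ?_⟩
  · have hset : {z | z < v ∧ s.coeff z ≠ 0} = (T : Set ℕ) := by
      ext z
      simp [hT, Finset.mem_filter, Finset.mem_range, Set.mem_setOf_eq]
    rw [hset, Set.ncard_coe_finset]
    exact hwt
  · rw [hwt]
    exact dvd_mul_right _ _
end
end
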